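/- arXiv:1106.2775 — 8 statements merged into one kernel-verified Lean document; each statement's English description precedes it below -/
import Mathlib

section
/- Let A be an n×n real symmetric matrix, ℓ ∈ ℝ, δ > 0 such that A ≻ (ℓ+δ)I, and let x ∈ ℝⁿ. If (1/δ)·(xᵀ(A−(ℓ+δ)I)⁻²x)/tr((A−(ℓ+δ)I)⁻²) − xᵀ(A−(ℓ+δ)I)⁻¹x ≥ 1, then tr((A + xxᵀ − (ℓ+δ)I)⁻¹) ≤ tr((A − ℓI)⁻¹). -/
/-!
Write `B = A - (ℓ + δ) • 1`. The Sherman–Morrison formula gives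
`tr (B + x xᵀ)⁻¹ = tr B⁻¹ - xᵀ B⁻² x / (1 + xᵀ B⁻¹ x)`, while the resolvent identity
`B⁻¹ - (B + δ)⁻¹ = δ B⁻¹ (B + δ)⁻¹` together with `B⁻¹ (B + δ)⁻¹ B⁻¹ ⪰ 0` gives
`tr B⁻¹ - tr (B + δ)⁻¹ ≤ δ tr B⁻²`. The hypothesis says precisely that the rank-one decrease
`xᵀ B⁻² x / (1 + xᵀ B⁻¹ x)` is at least `δ tr B⁻²`.
-/

open Matrix

namespace Matrix

variable {m K : Type*} [Fintype m] [DecidableEq m] [Field K]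

theorem inv_add_vecMulVec {B : Matrix m m K} (hB : IsUnit B) (u v : m → K)
    (h : 1 + v ⬝ᵥ B⁻¹ *ᵥ u ≠ 0) :
    (B + vecMulVec u v)⁻¹ =
      B⁻¹ - (1 + v ⬝ᵥ B⁻¹ *ᵥ u)⁻¹ • vecMulVec (B⁻¹ *ᵥ u) (v ᵥ* B⁻¹) := by
  have hBB : B * B⁻¹ = 1 := mul_nonsing_inv B ((isUnit_iff_isUnit_det B).mp hB)
  have hu : u + (v ⬝ᵥ B⁻¹ *ᵥ u) • u = (1 + v ⬝ᵥ B⁻¹ *ᵥ u) • u := by rw [add_smul, one_smul]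
  refine inv_eq_right_inv ?_
  rw [mul_sub, add_mul, hBB, Matrix.mul_smul, mul_vecMulVec, add_mulVec, mulVec_mulVec, hBB,
    one_mulVec, vecMulVec_mulVec, op_smul_eq_smul, vecMulVec_mul, hu, smul_vecMulVec, smul_smul,
    inv_mul_cancel₀ h, one_smul, add_sub_cancel_right]

theorem trace_inv_add_vecMulVec {B : Matrix m m K} (hB : IsUnit B) (u v : m → K)
    (h : 1 + v ⬝ᵥ B⁻¹ *ᵥ u ≠ 0) :
    (B + vecMulVec u v)⁻¹.trace =
      B⁻¹.trace - (v ⬝ᵥ (B⁻¹ ^ 2) *ᵥ u) / (1 + v ⬝ᵥ B⁻¹ *ᵥ u) := by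
  rw [inv_add_vecMulVec hB u v h, trace_sub, trace_smul, trace_vecMulVec,
    dotProduct_comm (B⁻¹ *ᵥ u), ← dotProduct_mulVec, mulVec_mulVec, sq, smul_eq_mul,
    inv_mul_eq_div]

theorem inv_sub_inv_add_smul_one {δ : K} {B : Matrix m m K} (hB : IsUnit B)
    (hBδ : IsUnit (B + δ • 1)) :
    B⁻¹ - (B + δ • 1)⁻¹ = δ • (B⁻¹ * (B + δ • 1)⁻¹) := by
  rw [nonsing_inv_eq_ringInverse, nonsing_inv_eq_ringInverse,
    Ring.inverse_sub_inverse (iff_of_true hB hBδ), add_sub_cancel_left, Matrix.mul_smul, mul_one,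
    Matrix.smul_mul]

theorem PosDef.trace_inv_sub_trace_inv_add_smul_one_le {B : Matrix m m ℝ} (hB : B.PosDef)
    {δ : ℝ} (hδ : 0 ≤ δ) :
    B⁻¹.trace - (B + δ • 1)⁻¹.trace ≤ δ * (B⁻¹ ^ 2).trace := by
  have hC : (B + δ • 1).PosDef := hB.add_posSemidef (PosSemidef.one.smul hδ)
  have hdiff := inv_sub_inv_add_smul_one hB.isUnit hC.isUnit
  have hcross : (B⁻¹ * (B + δ • 1)⁻¹).trace ≤ (B⁻¹ ^ 2).trace := by
    have hconj : (B⁻¹ * (B + δ • 1)⁻¹ * B⁻¹).PosSemidef := by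
      simpa only [hB.inv.isHermitian.eq] using hC.inv.posSemidef.conjTranspose_mul_mul_same B⁻¹
    have hgap : (B⁻¹ ^ 2).trace - (B⁻¹ * (B + δ • 1)⁻¹).trace =
        δ * (B⁻¹ * (B + δ • 1)⁻¹ * B⁻¹).trace := by
      rw [← trace_sub, sq, ← Matrix.mul_sub, hdiff, Matrix.mul_smul, trace_smul, smul_eq_mul,
        trace_mul_comm B⁻¹]
    linarith [mul_nonneg hδ hconj.trace_nonneg]
  rw [← trace_sub, hdiff, trace_smul, smul_eq_mul]
  exact mul_le_mul_of_nonneg_left hcross hδ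

end Matrix

theorem feasible_lower_shift_general {n : ℕ} (A : Matrix (Fin n) (Fin n) ℝ)
    (ℓ δ : ℝ) (hδ : 0 < δ) (x : Fin n → ℝ)
    (hpos : (A - (ℓ + δ) • (1 : Matrix (Fin n) (Fin n) ℝ)).PosDef)
    (hcond : 1 ≤ (1 / δ) * ((x ⬝ᵥ ((A - (ℓ + δ) • 1)⁻¹ ^ 2).mulVec x)
        / ((A - (ℓ + δ) • (1 : Matrix (Fin n) (Fin n) ℝ))⁻¹ ^ 2).trace)
      - x ⬝ᵥ ((A - (ℓ + δ) • 1)⁻¹).mulVec x) :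
    (A + vecMulVec x x - (ℓ + δ) • 1)⁻¹.trace ≤ (A - ℓ • 1)⁻¹.trace := by
  set B := A - (ℓ + δ) • (1 : Matrix (Fin n) (Fin n) ℝ) with hB
  set q₁ := x ⬝ᵥ B⁻¹ *ᵥ x
  set q₂ := x ⬝ᵥ (B⁻¹ ^ 2) *ᵥ x
  set t := (B⁻¹ ^ 2).trace
  have hq₁ : 0 ≤ q₁ := by simpa using hpos.inv.posSemidef.dotProduct_mulVec_nonneg x
  -- `q₂ / 0 = 0`, so `t = 0` would turn `hcond` into `1 ≤ -q₁`.
  have ht : 0 < t := by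
    refine (hpos.inv.posSemidef.pow 2).trace_nonneg.lt_of_ne fun h0 : 0 = t => ?_
    rw [← h0, div_zero, mul_zero, zero_sub] at hcond
    linarith
  have hgain : δ * t ≤ q₂ / (1 + q₁) := by
    rw [one_div, inv_mul_eq_div, div_div, le_sub_iff_add_le, le_div_iff₀ (by positivity)] at hcond
    rw [le_div_iff₀ (by positivity)]
    linarith
  have hshift : A - ℓ • 1 = B + δ • 1 := by rw [hB, add_smul]; abel
  have hrank_one : A + vecMulVec x x - (ℓ + δ) • 1 = B + vecMulVec x x := by rw [hB]; abel
  rw [hshift, hrank_one, trace_inv_add_vecMulVec hpos.isUnit x x (by positivity)]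
  linarith [hpos.trace_inv_sub_trace_inv_add_smul_one_le hδ.le]

theorem feasible_lower_shift {n : ℕ} (A : Matrix (Fin n) (Fin n) ℝ) (hA : A.IsSymm)
    (ℓ δ : ℝ) (hδ : 0 < δ) (x : Fin n → ℝ)
    (hpos : (A - (ℓ + δ) • (1 : Matrix (Fin n) (Fin n) ℝ)).PosDef)
    (hcond : 1 ≤ (1 / δ) * ((x ⬝ᵥ ((A - (ℓ + δ) • 1)⁻¹ ^ 2).mulVec x)
        / ((A - (ℓ + δ) • (1 : Matrix (Fin n) (Fin n) ℝ))⁻¹ ^ 2).trace)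
      - x ⬝ᵥ ((A - (ℓ + δ) • 1)⁻¹).mulVec x) :
    (A + vecMulVec x x - (ℓ + δ) • 1)⁻¹.trace ≤ (A - ℓ • 1)⁻¹.trace :=
  feasible_lower_shift_general A ℓ δ hδ x hpos hcond
end

section
/- Let A be an n×n symmetric matrix, ℓ ∈ ℝ, φ > 0 with A ≻ ℓI and tr((A−ℓI)⁻¹) ≤ φ. Then for every 0 < δ < 1/φ: (a) A ≻ (ℓ+δ)I; (b) q₁(0,x) ≤ q₁(δ,x) ≤ (1−δφ)⁻¹ q₁(0,x) for every x ∈ ℝⁿ, where q₁(δ,x) = xᵀ(A−(ℓ+δ)I)⁻¹x. -/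
/-!
Write `B = A - ℓ • 1`. Every eigenvalue `t` of `B` satisfies `t⁻¹ ≤ tr B⁻¹ ≤ φ`, so the spectrum
of `B` lies in `[1/φ, ∞)`, strictly to the right of `δ`. Both inverses are then functions of `B`
in the continuous functional calculus, `B⁻¹ = f(B)` and `(B - δ • 1)⁻¹ = g(B)` with
`f t = t⁻¹` and `g t = (t - δ)⁻¹`, and the scalar inequalities `t⁻¹ ≤ (t - δ)⁻¹ ≤ (1 - δφ)⁻¹ t⁻¹`
on `[1/φ, ∞)` lift to the Loewner order, hence to quadratic forms.
-/

open Matrix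
open scoped MatrixOrder

lemma lt_of_inv_le_of_mul_lt_one {t δ φ : ℝ} (ht : 0 < t) (htφ : t⁻¹ ≤ φ) (hδφ : δ * φ < 1) :
    δ < t := by
  have : 1 ≤ t * φ := by rwa [inv_le_iff_one_le_mul₀' ht] at htφ
  nlinarith

lemma inv_sub_le_of_inv_le {t δ φ : ℝ} (ht : 0 < t) (hδ : 0 ≤ δ) (hδφ : δ * φ < 1)
    (htφ : t⁻¹ ≤ φ) : (t - δ)⁻¹ ≤ (1 - δ * φ)⁻¹ * t⁻¹ := by
  have : 1 ≤ t * φ := by rwa [inv_le_iff_one_le_mul₀' ht] at htφ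
  rw [← mul_inv]
  exact inv_anti₀ (mul_pos (sub_pos.mpr hδφ) ht) (by nlinarith)

namespace Matrix

variable {ι : Type*} [Fintype ι] [DecidableEq ι] {B : Matrix ι ι ℝ}

lemma PosSemidef.le_trace_of_mem_spectrum (hB : B.PosSemidef) {t : ℝ} (ht : t ∈ spectrum ℝ B) :
    t ≤ B.trace := by
  obtain ⟨i, rfl⟩ := hB.isHermitian.spectrum_real_eq_range_eigenvalues ▸ ht
  rw [hB.isHermitian.trace_eq_sum_eigenvalues]
  exact Finset.single_le_sum (fun j _ => hB.eigenvalues_nonneg j) (Finset.mem_univ i)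

lemma PosDef.inv_le_trace_inv_of_mem_spectrum (hB : B.PosDef) {t : ℝ} (ht : t ∈ spectrum ℝ B) :
    t⁻¹ ≤ B⁻¹.trace := by
  lift B to (Matrix ι ι ℝ)ˣ using hB.isUnit
  apply hB.inv.posSemidef.le_trace_of_mem_spectrum
  rw [← coe_units_inv, ← spectrum.map_inv]
  exact Set.inv_mem_inv.mpr ht

omit [DecidableEq ι] in
lemma dotProduct_mulVec_le_of_le {M N : Matrix ι ι ℝ} (h : M ≤ N) (x : ι → ℝ) :
    x ⬝ᵥ M *ᵥ x ≤ x ⬝ᵥ N *ᵥ x := by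
  have := (le_iff.mp h).dotProduct_mulVec_nonneg x
  rwa [star_trivial, sub_mulVec, dotProduct_sub, sub_nonneg] at this

lemma IsHermitian.cfc_sub_const (hB : B.IsHermitian) (δ : ℝ) :
    cfc (fun t : ℝ => t - δ) B = B - δ • 1 := by
  rw [cfc_sub (fun t : ℝ => t) (fun _ => δ) B, cfc_id' ℝ B, cfc_const δ B,
    Algebra.algebraMap_eq_smul_one]

lemma IsHermitian.posDef_sub_smul_one (hB : B.IsHermitian) {δ : ℝ}
    (h : ∀ t ∈ spectrum ℝ B, δ < t) : (B - δ • 1).PosDef := by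
  rw [← isStrictlyPositive_iff_posDef, ← hB.cfc_sub_const,
    cfc_isStrictlyPositive_iff (fun t : ℝ => t - δ) B]
  exact fun t ht => sub_pos.mpr (h t ht)

lemma IsHermitian.inv_sub_smul_one_eq_cfc (hB : B.IsHermitian) {δ : ℝ}
    (h : ∀ t ∈ spectrum ℝ B, δ < t) : (B - δ • 1)⁻¹ = cfc (fun t : ℝ => (t - δ)⁻¹) B := by
  rw [nonsing_inv_eq_ringInverse, cfc_inv (fun t : ℝ => t - δ) B
    (fun t ht => (sub_pos.mpr (h t ht)).ne'), hB.cfc_sub_const]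

lemma PosDef.inv_eq_cfc (hB : B.PosDef) : B⁻¹ = cfc (fun t : ℝ => t⁻¹) B := by
  rw [nonsing_inv_eq_ringInverse, cfc_ringInverse_id B hB.isUnit]

lemma PosDef.inv_le_inv_sub_smul_one (hB : B.PosDef) {δ : ℝ} (hδ : 0 ≤ δ)
    (h : ∀ t ∈ spectrum ℝ B, δ < t) : B⁻¹ ≤ (B - δ • 1)⁻¹ := by
  rw [hB.inv_eq_cfc, hB.isHermitian.inv_sub_smul_one_eq_cfc h]
  exact cfc_mono (fun t ht => inv_anti₀ (sub_pos.mpr (h t ht)) (sub_le_self t hδ))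
    (B.finite_spectrum.continuousOn _) (B.finite_spectrum.continuousOn _)

lemma PosDef.inv_sub_smul_one_le (hB : B.PosDef) {δ φ : ℝ} (hδ : 0 ≤ δ) (hδφ : δ * φ < 1)
    (h : ∀ t ∈ spectrum ℝ B, t⁻¹ ≤ φ) : (B - δ • 1)⁻¹ ≤ (1 - δ * φ)⁻¹ • B⁻¹ := by
  have hpos : ∀ t ∈ spectrum ℝ B, 0 < t := fun t ht => hB.isStrictlyPositive.spectrum_pos ht
  rw [hB.inv_eq_cfc, hB.isHermitian.inv_sub_smul_one_eq_cfc
    fun t ht => lt_of_inv_le_of_mul_lt_one (hpos t ht) (h t ht) hδφ,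
    ← cfc_const_mul _ _ B (B.finite_spectrum.continuousOn _)]
  exact cfc_mono (fun t ht => inv_sub_le_of_inv_le (hpos t ht) hδ hδφ (h t ht))
    (B.finite_spectrum.continuousOn _) (B.finite_spectrum.continuousOn _)

end Matrix

theorem regularity_q1_general {n : ℕ} (A : Matrix (Fin n) (Fin n) ℝ)
    (ℓ φ δ : ℝ) (hφ : 0 < φ)
    (hpos : (A - ℓ • (1 : Matrix (Fin n) (Fin n) ℝ)).PosDef)
    (htr : (A - ℓ • (1 : Matrix (Fin n) (Fin n) ℝ))⁻¹.trace ≤ φ)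
    (hδ : 0 < δ) (hδφ : δ < 1 / φ) :
    (A - (ℓ + δ) • (1 : Matrix (Fin n) (Fin n) ℝ)).PosDef ∧
    ∀ x : Fin n → ℝ,
      x ⬝ᵥ ((A - ℓ • 1)⁻¹).mulVec x ≤ x ⬝ᵥ ((A - (ℓ + δ) • 1)⁻¹).mulVec x ∧
      x ⬝ᵥ ((A - (ℓ + δ) • 1)⁻¹).mulVec x
        ≤ (1 - δ * φ)⁻¹ * (x ⬝ᵥ ((A - ℓ • 1)⁻¹).mulVec x) := by
  set B := A - ℓ • (1 : Matrix (Fin n) (Fin n) ℝ)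
  have hshift : A - (ℓ + δ) • (1 : Matrix (Fin n) (Fin n) ℝ) = B - δ • 1 := by
    rw [add_smul, sub_add_eq_sub_sub]
  have hδφ_mul : δ * φ < 1 := by rwa [lt_div_iff₀ hφ] at hδφ
  have hspec : ∀ t ∈ spectrum ℝ B, t⁻¹ ≤ φ := fun t ht =>
    (hpos.inv_le_trace_inv_of_mem_spectrum ht).trans htr
  have hδt : ∀ t ∈ spectrum ℝ B, δ < t := fun t ht =>
    lt_of_inv_le_of_mul_lt_one (hpos.isStrictlyPositive.spectrum_pos ht) (hspec t ht) hδφ_mul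
  rw [hshift]
  refine ⟨hpos.isHermitian.posDef_sub_smul_one hδt, fun x => ⟨?_, ?_⟩⟩
  · exact dotProduct_mulVec_le_of_le (hpos.inv_le_inv_sub_smul_one hδ.le hδt) x
  · rw [← smul_eq_mul, ← dotProduct_smul, ← smul_mulVec]
    exact dotProduct_mulVec_le_of_le (hpos.inv_sub_smul_one_le hδ.le hδφ_mul hspec) x

theorem regularity_q1 {n : ℕ} (A : Matrix (Fin n) (Fin n) ℝ) (hA : A.IsSymm)
    (ℓ φ δ : ℝ) (hφ : 0 < φ)
    (hpos : (A - ℓ • (1 : Matrix (Fin n) (Fin n) ℝ)).PosDef)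
    (htr : (A - ℓ • (1 : Matrix (Fin n) (Fin n) ℝ))⁻¹.trace ≤ φ)
    (hδ : 0 < δ) (hδφ : δ < 1 / φ) :
    (A - (ℓ + δ) • (1 : Matrix (Fin n) (Fin n) ℝ)).PosDef ∧
    ∀ x : Fin n → ℝ,
      x ⬝ᵥ ((A - ℓ • 1)⁻¹).mulVec x ≤ x ⬝ᵥ ((A - (ℓ + δ) • 1)⁻¹).mulVec x ∧
      x ⬝ᵥ ((A - (ℓ + δ) • 1)⁻¹).mulVec x
        ≤ (1 - δ * φ)⁻¹ * (x ⬝ᵥ ((A - ℓ • 1)⁻¹).mulVec x) :=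
  regularity_q1_general A ℓ φ δ hφ hpos htr hδ hδφ
end

section
/- Let A be an n×n symmetric matrix, ℓ ∈ ℝ, φ > 0 with A ≻ ℓI and tr((A−ℓI)⁻¹) ≤ φ. Let X be an isotropic random vector satisfying sup_{‖v‖₂≤1} E|⟨X,v⟩|^{2+η} ≤ C for some C, η > 0, and set p = 1 + η/2. Then E[q₁(0,X)^p] ≤ C φ^p, where q₁(0,x) = xᵀ(A−ℓI)⁻¹x. -/
/-!
Diagonalise `B = (A - ℓ I)⁻¹ = ∑ λᵢ bᵢ bᵢᵀ` in an orthonormal eigenbasis, so that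
`q₁(0, X) = ∑ λᵢ ⟨X, bᵢ⟩²` with `λᵢ > 0` and `∑ λᵢ = tr B ≤ φ`. By the weighted Hölder inequality,
`(∑ λᵢ ⟨X, bᵢ⟩²)^p ≤ (∑ λᵢ)^(p-1) ∑ λᵢ |⟨X, bᵢ⟩|^(2p)`, and each `bᵢ` is a unit vector, so taking
expectations and using `2p = 2 + η` gives `E q₁^p ≤ (∑ λᵢ)^p C ≤ φ^p C`.
-/

open Matrix MeasureTheory

theorem Matrix.IsHermitian.dotProduct_mulVec_eq_sum_eigenvalues_mul_sq {n : Type*} [Fintype n]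
    [DecidableEq n] {B : Matrix n n ℝ} (hB : B.IsHermitian) (x : n → ℝ) :
    x ⬝ᵥ B *ᵥ x = ∑ i, hB.eigenvalues i * (x ⬝ᵥ ⇑(hB.eigenvectorBasis i)) ^ 2 := by
  have hx : x = ∑ i, (x ⬝ᵥ ⇑(hB.eigenvectorBasis i)) • ⇑(hB.eigenvectorBasis i) := by
    have := congrArg WithLp.ofLp (hB.eigenvectorBasis.sum_repr' (WithLp.toLp 2 x))
    simpa [EuclideanSpace.inner_eq_star_dotProduct, dotProduct_comm] using this.symm
  conv_lhs => rw [hx]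
  simp only [mulVec_sum, mulVec_smul, hB.mulVec_eigenvectorBasis, dotProduct_sum, dotProduct_smul,
    smul_eq_mul]
  rw [← hx]
  exact Finset.sum_congr rfl fun i _ => by ring

theorem OrthonormalBasis.sum_sq_apply_eq_one {ι n : Type*} [Fintype ι] [Fintype n]
    (b : OrthonormalBasis ι ℝ (EuclideanSpace ℝ n)) (i : ι) : ∑ j, b i j ^ 2 = 1 := by
  have := EuclideanSpace.norm_eq (b i)
  rw [b.orthonormal.1 i, eq_comm, Real.sqrt_eq_one] at this
  simpa using this

theorem Real.rpow_sum_mul_le_sum_rpow_mul_sum {ι : Type*} (s : Finset ι) {p : ℝ} (hp : 1 ≤ p)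
    (w z : ι → ℝ) (hw : ∀ i, 0 ≤ w i) (hz : ∀ i, 0 ≤ z i) :
    (∑ i ∈ s, w i * z i) ^ p ≤ (∑ i ∈ s, w i) ^ (p - 1) * ∑ i ∈ s, w i * z i ^ p := by
  have hW : 0 ≤ ∑ i ∈ s, w i := Finset.sum_nonneg fun i _ => hw i
  have hWz : 0 ≤ ∑ i ∈ s, w i * z i ^ p :=
    Finset.sum_nonneg fun i _ => mul_nonneg (hw i) (Real.rpow_nonneg (hz i) p)
  calc (∑ i ∈ s, w i * z i) ^ p
      ≤ ((∑ i ∈ s, w i) ^ (1 - p⁻¹) * (∑ i ∈ s, w i * z i ^ p) ^ p⁻¹) ^ p :=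
        Real.rpow_le_rpow (Finset.sum_nonneg fun i _ => mul_nonneg (hw i) (hz i))
          (Real.inner_le_weight_mul_Lp_of_nonneg s hp w z hw hz) (by linarith)
    _ = (∑ i ∈ s, w i) ^ (p - 1) * ∑ i ∈ s, w i * z i ^ p := by
        have hp0 : p ≠ 0 := by positivity
        rw [Real.mul_rpow (by positivity) (by positivity), ← Real.rpow_mul hW, ← Real.rpow_mul hWz,
          inv_mul_cancel₀ hp0, Real.rpow_one, sub_mul, one_mul, inv_mul_cancel₀ hp0]

namespace MeasureTheory

variable {ι Ω : Type*} [Fintype ι] [MeasurableSpace Ω] {μ : Measure Ω} {p : ℝ} {w : ι → ℝ}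
  {z : ι → Ω → ℝ}

theorem integrable_rpow_of_integrable_rpow_sum_mul (hp : 0 ≤ p) (hw : ∀ i, 0 < w i)
    (hz : ∀ i ω, 0 ≤ z i ω) (hzm : ∀ i, AEMeasurable (z i) μ)
    (hint : Integrable (fun ω => (∑ i, w i * z i ω) ^ p) μ) (i : ι) :
    Integrable (fun ω => z i ω ^ p) μ := by
  refine (hint.const_mul (w i ^ (-p))).mono' ((hzm i).pow_const p).aestronglyMeasurable
    (.of_forall fun ω => ?_)
  have hterm : w i * z i ω ≤ ∑ j, w j * z j ω :=
    Finset.single_le_sum (f := fun j => w j * z j ω) (fun j _ => mul_nonneg (hw j).le (hz j ω))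
      (Finset.mem_univ i)
  rw [Real.norm_of_nonneg (Real.rpow_nonneg (hz i ω) p), Real.rpow_neg (hw i).le,
    inv_mul_eq_div, le_div_iff₀ (by have := hw i; positivity),
    ← Real.mul_rpow (hz i ω) (hw i).le, mul_comm]
  exact Real.rpow_le_rpow (mul_nonneg (hw i).le (hz i ω)) hterm hp

theorem integral_rpow_sum_mul_le {C : ℝ} (hp : 1 ≤ p) (hC : 0 ≤ C) (hw : ∀ i, 0 < w i)
    (hz : ∀ i ω, 0 ≤ z i ω) (hzm : ∀ i, AEMeasurable (z i) μ)
    (hzC : ∀ i, ∫ ω, z i ω ^ p ∂μ ≤ C) :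
    ∫ ω, (∑ i, w i * z i ω) ^ p ∂μ ≤ (∑ i, w i) ^ p * C := by
  have hW : 0 ≤ ∑ i, w i := Finset.sum_nonneg fun i _ => (hw i).le
  by_cases hint : Integrable (fun ω => (∑ i, w i * z i ω) ^ p) μ
  swap
  · rw [integral_undef hint]
    positivity
  have hzint := integrable_rpow_of_integrable_rpow_sum_mul (by linarith) hw hz hzm hint
  calc ∫ ω, (∑ i, w i * z i ω) ^ p ∂μ
      ≤ ∫ ω, (∑ i, w i) ^ (p - 1) * ∑ i, w i * z i ω ^ p ∂μ :=
        integral_mono hint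
          ((integrable_finsetSum _ fun i _ => (hzint i).const_mul (w i)).const_mul _)
          fun ω => Real.rpow_sum_mul_le_sum_rpow_mul_sum _ hp _ _ (fun i => (hw i).le) (hz · ω)
    _ = (∑ i, w i) ^ (p - 1) * ∑ i, w i * ∫ ω, z i ω ^ p ∂μ := by
        rw [integral_const_mul, integral_finsetSum _ fun i _ => (hzint i).const_mul (w i)]
        simp only [integral_const_mul]
    _ ≤ (∑ i, w i) ^ (p - 1) * ∑ i, w i * C := by
        gcongr with i
        · exact (hw i).le
        · exact hzC i
    _ = (∑ i, w i) ^ p * C := by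
        rw [← Finset.sum_mul, ← mul_assoc, ← Real.rpow_add_one' hW (by linarith), sub_add_cancel]

end MeasureTheory

theorem moments_quadratic_q1_p_general {n : ℕ} (A : Matrix (Fin n) (Fin n) ℝ)
    (ℓ φ C η : ℝ) (hC : 0 < C) (hη : 0 < η)
    (hpos : (A - ℓ • (1 : Matrix (Fin n) (Fin n) ℝ)).PosDef)
    (htr : (A - ℓ • (1 : Matrix (Fin n) (Fin n) ℝ))⁻¹.trace ≤ φ)
    {Ω : Type*} [MeasureSpace Ω]
    (X : Ω → Fin n → ℝ) (hX : Measurable X)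
    (hreg : ∀ v : Fin n → ℝ, ∑ i, v i ^ 2 ≤ 1 →
      ∫ ω, |X ω ⬝ᵥ v| ^ (2 + η) ≤ C) :
    ∫ ω, (X ω ⬝ᵥ ((A - ℓ • 1)⁻¹).mulVec (X ω)) ^ (1 + η / 2)
      ≤ C * φ ^ (1 + η / 2) := by
  have hB := hpos.inv
  set b := hB.isHermitian.eigenvectorBasis
  set ev := hB.isHermitian.eigenvalues
  have hp : 1 ≤ 1 + η / 2 := by linarith
  have hmoment : ∀ i, ∫ ω, ((X ω ⬝ᵥ ⇑(b i)) ^ 2) ^ (1 + η / 2) ≤ C := fun i => by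
    simp_rw [← sq_abs (X _ ⬝ᵥ _), ← Real.rpow_natCast, ← Real.rpow_mul (abs_nonneg _)]
    convert hreg _ (b.sum_sq_apply_eq_one i).le using 4
    ring
  have htrace : ∑ i, ev i ≤ φ := by
    simpa [hB.isHermitian.trace_eq_sum_eigenvalues] using htr
  simp_rw [hB.isHermitian.dotProduct_mulVec_eq_sum_eigenvalues_mul_sq]
  calc _ ≤ (∑ i, ev i) ^ (1 + η / 2) * C :=
        integral_rpow_sum_mul_le hp hC.le hB.eigenvalues_pos (fun i ω => sq_nonneg _)
          (fun i => by fun_prop) hmoment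
    _ ≤ C * φ ^ (1 + η / 2) := by
        rw [mul_comm]
        gcongr
        exact Finset.sum_nonneg fun i _ => (hB.eigenvalues_pos i).le

theorem moments_quadratic_q1_p {n : ℕ} (A : Matrix (Fin n) (Fin n) ℝ) (hA : A.IsSymm)
    (ℓ φ C η : ℝ) (hφ : 0 < φ) (hC : 0 < C) (hη : 0 < η)
    (hpos : (A - ℓ • (1 : Matrix (Fin n) (Fin n) ℝ)).PosDef)
    (htr : (A - ℓ • (1 : Matrix (Fin n) (Fin n) ℝ))⁻¹.trace ≤ φ)
    {Ω : Type*} [MeasureSpace Ω] [IsProbabilityMeasure (volume : Measure Ω)]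
    (X : Ω → Fin n → ℝ) (hX : Measurable X)
    (hint : ∀ i j, Integrable (fun ω => X ω i * X ω j))
    (hiso : ∀ i j, ∫ ω, X ω i * X ω j = if i = j then (1 : ℝ) else 0)
    (hreg : ∀ v : Fin n → ℝ, ∑ i, v i ^ 2 ≤ 1 →
      ∫ ω, |X ω ⬝ᵥ v| ^ (2 + η) ≤ C) :
    ∫ ω, (X ω ⬝ᵥ ((A - ℓ • 1)⁻¹).mulVec (X ω)) ^ (1 + η / 2)
      ≤ C * φ ^ (1 + η / 2) :=
  moments_quadratic_q1_p_general A ℓ φ C η hC hη hpos htr X hX hreg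
end

section
/- Let A be an n×n symmetric matrix, u ∈ ℝ with A ≺ uI, Δ > 0, and x ∈ ℝⁿ. If Q₂(Δ,x) + Q₁(Δ,x) ≤ 1, where Q₁(Δ,x) = xᵀ((u+Δ)I−A)⁻¹x and Q₂(Δ,x) = xᵀ((u+Δ)I−A)⁻²x / (tr((uI−A)⁻¹) − tr(((u+Δ)I−A)⁻¹)), then A + xxᵀ ≺ (u+Δ)I and tr(((u+Δ)I − A − xxᵀ)⁻¹) ≤ tr((uI−A)⁻¹). -/
/-! Write `B = (u + Δ)I - A`, `q = xᵀB⁻¹x`, `s = xᵀB⁻²x` and `D = tr (uI - A)⁻¹ - tr B⁻¹`; then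
`D > 0` because `(uI - A)⁻¹ - B⁻¹ = Δ ((uI - A)B)⁻¹`, and the hypothesis reads `s / D + q ≤ 1`,
which forces `q < 1`. Cauchy–Schwarz for the form of `B⁻¹`, applied to `x` and `Bz`, gives
`(xᵀz)² ≤ q zᵀBz < zᵀBz`, so `B - xxᵀ` is positive definite, and by Sherman–Morrison
`tr (B - xxᵀ)⁻¹ = tr B⁻¹ + s / (1 - q) ≤ tr B⁻¹ + D`. -/

namespace Matrix

variable {ι : Type*}

theorem PosDef.add_smul_one [DecidableEq ι] {M : Matrix ι ι ℝ} (hM : M.PosDef) {Δ : ℝ}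
    (hΔ : 0 ≤ Δ) : (M + Δ • 1).PosDef :=
  hM.add_posSemidef (PosSemidef.one.smul hΔ)

variable [Fintype ι]

section Field

variable {K : Type*} [Field K] [DecidableEq ι] {B : Matrix ι ι K}

theorem inv_sub_vecMulVec (hB : IsUnit B.det) (x y : ι → K) (hq : y ⬝ᵥ B⁻¹ *ᵥ x ≠ 1) :
    (B - vecMulVec x y)⁻¹
      = B⁻¹ + (1 - y ⬝ᵥ B⁻¹ *ᵥ x)⁻¹ • vecMulVec (B⁻¹ *ᵥ x) (y ᵥ* B⁻¹) := by
  set q := y ⬝ᵥ B⁻¹ *ᵥ x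
  have hc : (1 - q)⁻¹ * (1 - q) = 1 := inv_mul_cancel₀ (sub_ne_zero.mpr hq.symm)
  refine inv_eq_right_inv ?_
  rw [sub_mul, mul_add, mul_add, mul_smul_comm, mul_smul_comm, mul_nonsing_inv _ hB,
    mul_vecMulVec, mulVec_mulVec, mul_nonsing_inv _ hB, one_mulVec, vecMulVec_mul,
    vecMulVec_mul_vecMulVec, vecMulVec_smul, smul_smul]
  linear_combination (norm := module) hc • vecMulVec x (y ᵥ* B⁻¹)

theorem trace_inv_sub_vecMulVec (hB : IsUnit B.det) (x y : ι → K) (hq : y ⬝ᵥ B⁻¹ *ᵥ x ≠ 1) :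
    (B - vecMulVec x y)⁻¹.trace
      = B⁻¹.trace + (1 - y ⬝ᵥ B⁻¹ *ᵥ x)⁻¹ * (y ⬝ᵥ (B⁻¹ ^ 2) *ᵥ x) := by
  rw [inv_sub_vecMulVec hB x y hq, trace_add, trace_smul, trace_vecMulVec, smul_eq_mul,
    dotProduct_comm (B⁻¹ *ᵥ x), pow_two, ← mulVec_mulVec, dotProduct_mulVec y B⁻¹ (B⁻¹ *ᵥ x)]

end Field

theorem PosSemidef.sq_dotProduct_mulVec_le {M : Matrix ι ι ℝ} (hM : M.PosSemidef) (a b : ι → ℝ) :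
    (a ⬝ᵥ M *ᵥ b) ^ 2 ≤ (a ⬝ᵥ M *ᵥ a) * (b ⬝ᵥ M *ᵥ b) := by
  have hsymm : b ⬝ᵥ M *ᵥ a = a ⬝ᵥ M *ᵥ b := by
    rw [dotProduct_mulVec, ← mulVec_transpose, (isHermitian_iff_isSymm.mp hM.isHermitian).eq,
      dotProduct_comm]
  have hdisc := discrim_le_zero (a := b ⬝ᵥ M *ᵥ b) (b := 2 * (a ⬝ᵥ M *ᵥ b)) (c := a ⬝ᵥ M *ᵥ a)
    fun t => by
      have := hM.dotProduct_mulVec_nonneg (a + t • b)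
      simp only [star_trivial, mulVec_add, mulVec_smul, dotProduct_add, add_dotProduct,
        dotProduct_smul, smul_dotProduct, smul_eq_mul, hsymm] at this
      linarith
  rw [discrim] at hdisc
  linarith

theorem PosDef.sub_vecMulVec_self [DecidableEq ι] {B : Matrix ι ι ℝ} (hB : B.PosDef) {x : ι → ℝ}
    (hq : x ⬝ᵥ B⁻¹ *ᵥ x < 1) : (B - vecMulVec x x).PosDef := by
  refine .of_dotProduct_mulVec_pos
    (hB.isHermitian.sub (isHermitian_iff_isSymm.mpr (transpose_vecMulVec x x))) fun z hz => ?_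
  have hBz : 0 < z ⬝ᵥ B *ᵥ z := by simpa using hB.dotProduct_mulVec_pos hz
  have hcs := hB.inv.posSemidef.sq_dotProduct_mulVec_le x (B *ᵥ z)
  rw [mulVec_mulVec, nonsing_inv_mul _ hB.det_pos.ne'.isUnit, one_mulVec,
    dotProduct_comm (B *ᵥ z)] at hcs
  rw [star_trivial, sub_mulVec, dotProduct_sub, vecMulVec_mulVec, op_smul_eq_smul,
    dotProduct_smul, smul_eq_mul, dotProduct_comm z x]
  nlinarith [mul_lt_mul_of_pos_right hq hBz]

theorem PosDef.trace_inv_add_smul_one_lt [DecidableEq ι] [Nonempty ι] {M : Matrix ι ι ℝ}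
    (hM : M.PosDef) {Δ : ℝ} (hΔ : 0 < Δ) : (M + Δ • 1)⁻¹.trace < M⁻¹.trace := by
  have hP : (M * (M + Δ • 1)).PosDef := by
    rw [mul_add, mul_smul_comm, mul_one]
    simpa only [hM.isHermitian.eq] using
      PosDef.posSemidef_add (posSemidef_conjTranspose_mul_self M) (hM.smul hΔ)
  have hB := hM.add_smul_one hΔ.le
  have hdiff : M⁻¹ - (M + Δ • 1)⁻¹ = Δ • (M * (M + Δ • 1))⁻¹ := by
    calc M⁻¹ - (M + Δ • 1)⁻¹ = (M + Δ • 1)⁻¹ * ((M + Δ • 1) - M) * M⁻¹ := by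
          rw [mul_sub, sub_mul, nonsing_inv_mul _ hB.det_pos.ne'.isUnit, one_mul, mul_assoc,
            mul_nonsing_inv _ hM.det_pos.ne'.isUnit, mul_one]
      _ = Δ • (M * (M + Δ • 1))⁻¹ := by
          rw [add_sub_cancel_left, mul_smul_comm, mul_one, smul_mul_assoc, mul_inv_rev]
  rw [← sub_pos, ← trace_sub, hdiff, trace_smul, smul_eq_mul]
  exact mul_pos hΔ hP.inv.trace_pos

theorem PosDef.sub_vecMulVec_self_and_trace_inv_le [DecidableEq ι] {B : Matrix ι ι ℝ}
    (hB : B.PosDef) {x : ι → ℝ} {D : ℝ} (hD : 0 < D)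
    (h : x ⬝ᵥ (B⁻¹ ^ 2) *ᵥ x / D + x ⬝ᵥ B⁻¹ *ᵥ x ≤ 1) :
    (B - vecMulVec x x).PosDef ∧ (B - vecMulVec x x)⁻¹.trace ≤ B⁻¹.trace + D := by
  have hs : x ⬝ᵥ (B⁻¹ ^ 2) *ᵥ x = (B⁻¹ *ᵥ x) ⬝ᵥ (B⁻¹ *ᵥ x) := by
    rw [pow_two, ← mulVec_mulVec, dotProduct_mulVec, ← mulVec_transpose,
      (isHermitian_iff_isSymm.mp hB.inv.isHermitian).eq]
  have hq : x ⬝ᵥ B⁻¹ *ᵥ x < 1 := by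
    rcases eq_or_ne (B⁻¹ *ᵥ x) 0 with hw | hw
    · simp [hw]
    · have : 0 < (B⁻¹ *ᵥ x) ⬝ᵥ (B⁻¹ *ᵥ x) := by
        simpa using dotProduct_star_self_pos_iff.mpr hw
      have := div_pos (hs ▸ this) hD
      linarith
  refine ⟨hB.sub_vecMulVec_self hq, ?_⟩
  rw [trace_inv_sub_vecMulVec hB.det_pos.ne'.isUnit x x hq.ne, add_le_add_iff_left,
    inv_mul_le_iff₀ (sub_pos.mpr hq), ← div_le_iff₀ hD]
  linarith

end Matrix

open Matrix

theorem feasible_upper_shift_general {n : ℕ} (A : Matrix (Fin n) (Fin n) ℝ)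
    (u Δ : ℝ) (hΔ : 0 < Δ) (x : Fin n → ℝ)
    (hpos : (u • (1 : Matrix (Fin n) (Fin n) ℝ) - A).PosDef)
    (hcond : (x ⬝ᵥ (((u + Δ) • 1 - A)⁻¹ ^ 2).mulVec x)
        / ((u • (1 : Matrix (Fin n) (Fin n) ℝ) - A)⁻¹.trace
            - ((u + Δ) • (1 : Matrix (Fin n) (Fin n) ℝ) - A)⁻¹.trace)
      + x ⬝ᵥ (((u + Δ) • 1 - A)⁻¹).mulVec x ≤ 1) :
    ((u + Δ) • (1 : Matrix (Fin n) (Fin n) ℝ) - (A + vecMulVec x x)).PosDef ∧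
    ((u + Δ) • (1 : Matrix (Fin n) (Fin n) ℝ) - (A + vecMulVec x x))⁻¹.trace
      ≤ (u • (1 : Matrix (Fin n) (Fin n) ℝ) - A)⁻¹.trace := by
  rcases isEmpty_or_nonempty (Fin n) with _ | _
  · simp [Subsingleton.elim _ (1 : Matrix (Fin n) (Fin n) ℝ), PosDef.one]
  have hshift : (u + Δ) • (1 : Matrix (Fin n) (Fin n) ℝ) - A = (u • 1 - A) + Δ • 1 := by
    rw [add_smul]; abel
  have hB : ((u + Δ) • (1 : Matrix (Fin n) (Fin n) ℝ) - A).PosDef :=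
    hshift ▸ hpos.add_smul_one hΔ.le
  have hD := sub_pos.mpr (hshift ▸ hpos.trace_inv_add_smul_one_lt hΔ)
  obtain ⟨hposDef, htrace⟩ := hB.sub_vecMulVec_self_and_trace_inv_le hD hcond
  rw [sub_add_eq_sub_sub]
  exact ⟨hposDef, by linarith⟩

theorem feasible_upper_shift {n : ℕ} (A : Matrix (Fin n) (Fin n) ℝ) (hA : A.IsSymm)
    (u Δ : ℝ) (hΔ : 0 < Δ) (x : Fin n → ℝ)
    (hpos : (u • (1 : Matrix (Fin n) (Fin n) ℝ) - A).PosDef)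
    (hcond : (x ⬝ᵥ (((u + Δ) • 1 - A)⁻¹ ^ 2).mulVec x)
        / ((u • (1 : Matrix (Fin n) (Fin n) ℝ) - A)⁻¹.trace
            - ((u + Δ) • (1 : Matrix (Fin n) (Fin n) ℝ) - A)⁻¹.trace)
      + x ⬝ᵥ (((u + Δ) • 1 - A)⁻¹).mulVec x ≤ 1) :
    ((u + Δ) • (1 : Matrix (Fin n) (Fin n) ℝ) - (A + vecMulVec x x)).PosDef ∧
    ((u + Δ) • (1 : Matrix (Fin n) (Fin n) ℝ) - (A + vecMulVec x x))⁻¹.trace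
      ≤ (u • (1 : Matrix (Fin n) (Fin n) ℝ) - A)⁻¹.trace :=
  feasible_upper_shift_general A u Δ hΔ x hpos hcond
end

section
/- Let A be an n×n symmetric matrix with A ≺ uI and tr((uI−A)⁻¹) ≤ φ for some φ > 0. Then for every Δ ≥ 0 and x ∈ ℝⁿ, Q₂'(Δ,x) ≤ (1+φΔ)² Q₂'(0,x), where Q₂'(Δ,x) = xᵀ((u+Δ)I−A)⁻²x / tr(((u+Δ)I−A)⁻²). -/
/-!
Diagonalize `A` with eigenvalues `λᵢ < u` and write `y` for `x` in the eigenbasis. Both sides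
are then weighted means of the `yᵢ²`, with weights `(c - λᵢ)⁻²` for `c = u + Δ` and `c = u`.
Shifting by `Δ` can only shrink the numerator, while the trace bound gives `(u - λᵢ)⁻¹ ≤ φ`,
hence `u + Δ - λᵢ ≤ (1 + φΔ)(u - λᵢ)`, so the denominator shrinks by at most `(1 + φΔ)²`.
-/

open Matrix

lemma inv_le_one_add_mul_mul_inv_add {a φ Δ : ℝ} (ha : 0 < a) (hφ : a⁻¹ ≤ φ) (hΔ : 0 ≤ Δ) :
    a⁻¹ ≤ (1 + φ * Δ) * (a + Δ)⁻¹ := by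
  have haΔ : 0 < a + Δ := by linarith
  calc a⁻¹ = (1 + a⁻¹ * Δ) * (a + Δ)⁻¹ := by field_simp
    _ ≤ (1 + φ * Δ) * (a + Δ)⁻¹ := by gcongr

lemma div_le_mul_div_of_le_of_le {N N' S S' k : ℝ} (hN : 0 ≤ N) (hNN' : N' ≤ N)
    (hS : 0 < S) (hS' : 0 < S') (hSS' : S ≤ k * S') :
    N' / S' ≤ k * (N / S) := by
  calc N' / S' ≤ N / S' := by gcongr
    _ ≤ k * (N / S) := by
      rw [mul_div_assoc', div_le_div_iff₀ hS' hS]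
      nlinarith

theorem inv_sq_weighted_mean_shift_le {ι : Type*} [Fintype ι] (lam w : ι → ℝ) {u φ Δ : ℝ}
    (hlam : ∀ i, lam i < u) (htr : ∑ i, (u - lam i)⁻¹ ≤ φ) (hΔ : 0 ≤ Δ) (hw : ∀ i, 0 ≤ w i) :
    (∑ i, (u + Δ - lam i)⁻¹ ^ 2 * w i) / ∑ i, (u + Δ - lam i)⁻¹ ^ 2
      ≤ (1 + φ * Δ) ^ 2 * ((∑ i, (u - lam i)⁻¹ ^ 2 * w i) / ∑ i, (u - lam i)⁻¹ ^ 2) := by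
  rcases isEmpty_or_nonempty ι with _ | _
  · simp
  have ha : ∀ i, 0 < u - lam i := fun i => sub_pos.2 (hlam i)
  have hb : ∀ i, 0 < u + Δ - lam i := fun i => by linarith [ha i]
  have hshift : ∀ i, (u + Δ - lam i)⁻¹ ≤ (u - lam i)⁻¹ := fun i => inv_anti₀ (ha i) (by linarith)
  have hcompare : ∀ i, (u - lam i)⁻¹ ≤ (1 + φ * Δ) * (u + Δ - lam i)⁻¹ := fun i => by
    have hle : (u - lam i)⁻¹ ≤ φ :=
      (Finset.single_le_sum (fun j _ => (inv_pos.2 (ha j)).le) (Finset.mem_univ i)).trans htr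
    simpa [sub_add_eq_add_sub] using inv_le_one_add_mul_mul_inv_add (ha i) hle hΔ
  refine div_le_mul_div_of_le_of_le (Finset.sum_nonneg fun i _ => mul_nonneg (sq_nonneg _) (hw i))
    (Finset.sum_le_sum fun i _ => ?_)
    (Finset.sum_pos (fun i _ => pow_pos (inv_pos.2 (ha i)) 2) Finset.univ_nonempty)
    (Finset.sum_pos (fun i _ => pow_pos (inv_pos.2 (hb i)) 2) Finset.univ_nonempty) ?_
  · exact mul_le_mul_of_nonneg_right (pow_le_pow_left₀ (inv_pos.2 (hb i)).le (hshift i) 2) (hw i)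
  · rw [Finset.mul_sum]
    exact Finset.sum_le_sum fun i _ =>
      (pow_le_pow_left₀ (inv_pos.2 (ha i)).le (hcompare i) 2).trans_eq (mul_pow _ _ _)

namespace Matrix

open scoped ComplexOrder

variable {ι 𝕜 : Type*} [Fintype ι] [DecidableEq ι] [RCLike 𝕜] {A : Matrix ι ι 𝕜}

lemma lt_of_mem_spectrum_of_posDef_smul_one_sub {u t : ℝ}
    (h : (u • (1 : Matrix ι ι 𝕜) - A).PosDef) (ht : t ∈ spectrum ℝ A) : t < u := by
  open scoped MatrixOrder in
  have hmem : u - t ∈ spectrum ℝ (u • (1 : Matrix ι ι 𝕜) - A) := by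
    rw [← Algebra.algebraMap_eq_smul_one, ← spectrum.singleton_sub_eq]
    exact Set.sub_mem_sub rfl ht
  exact sub_pos.1 (h.isStrictlyPositive.spectrum_pos hmem)

namespace IsHermitian

lemma smul_one_sub_eq_cfc (hA : A.IsHermitian) (c : ℝ) :
    c • (1 : Matrix ι ι 𝕜) - A = cfc (fun t => c - t) A := by
  rw [cfc_sub .., cfc_const c A, cfc_id' ℝ A, Algebra.algebraMap_eq_smul_one]

lemma inv_smul_one_sub_eq_cfc (hA : A.IsHermitian) {c : ℝ} (hc : c ∉ spectrum ℝ A) :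
    (c • (1 : Matrix ι ι 𝕜) - A)⁻¹ = cfc (fun t => (c - t)⁻¹) A := by
  refine inv_eq_right_inv ?_
  rw [hA.smul_one_sub_eq_cfc, ← cfc_mul _ _ A (by fun_prop) (finite_real_spectrum.continuousOn _),
    ← cfc_one ℝ A]
  exact cfc_congr fun t ht => mul_inv_cancel₀ (sub_ne_zero.2 (ne_of_mem_of_not_mem ht hc).symm)

lemma trace_cfc (hA : A.IsHermitian) (f : ℝ → ℝ) :
    (cfc f A).trace = ∑ i, (f (hA.eigenvalues i) : 𝕜) := by
  rw [hA.cfc_eq, IsHermitian.cfc, Unitary.conjStarAlgAut_apply, trace_mul_cycle,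
    Unitary.coe_star_mul_self, one_mul, trace_diagonal]
  rfl

lemma dotProduct_cfc_mulVec {A : Matrix ι ι ℝ} (hA : A.IsHermitian) (f : ℝ → ℝ) (x : ι → ℝ) :
    x ⬝ᵥ cfc f A *ᵥ x
      = ∑ i, f (hA.eigenvalues i) * (star (hA.eigenvectorUnitary : Matrix ι ι ℝ) *ᵥ x) i ^ 2 := by
  rw [hA.cfc_eq, IsHermitian.cfc, Unitary.conjStarAlgAut_apply, ← mulVec_mulVec, ← mulVec_mulVec,
    dotProduct_mulVec, ← mulVec_transpose, ← conjTranspose_eq_transpose_of_trivial,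
    ← star_eq_conjTranspose]
  simp only [dotProduct, mulVec_diagonal, Function.comp_apply, RCLike.ofReal_real_eq_id, id]
  exact Finset.sum_congr rfl fun i _ => by ring

end IsHermitian

end Matrix

theorem regularity_Q2'_general {n : ℕ} (A : Matrix (Fin n) (Fin n) ℝ) (hA : A.IsSymm)
    (u φ : ℝ)
    (hpos : (u • (1 : Matrix (Fin n) (Fin n) ℝ) - A).PosDef)
    (htr : (u • (1 : Matrix (Fin n) (Fin n) ℝ) - A)⁻¹.trace ≤ φ)
    (Δ : ℝ) (hΔ : 0 ≤ Δ) (x : Fin n → ℝ) :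
    (x ⬝ᵥ (((u + Δ) • 1 - A)⁻¹ ^ 2).mulVec x)
        / (((u + Δ) • (1 : Matrix (Fin n) (Fin n) ℝ) - A)⁻¹ ^ 2).trace
      ≤ (1 + φ * Δ) ^ 2 * ((x ⬝ᵥ ((u • 1 - A)⁻¹ ^ 2).mulVec x)
        / ((u • (1 : Matrix (Fin n) (Fin n) ℝ) - A)⁻¹ ^ 2).trace) := by
  have hH : A.IsHermitian := isHermitian_iff_isSymm.2 hA
  have hlt : ∀ t ∈ spectrum ℝ A, t < u := fun t => lt_of_mem_spectrum_of_posDef_smul_one_sub hpos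
  have hres : ∀ c, u ≤ c → (c • 1 - A)⁻¹ = cfc (fun t => (c - t)⁻¹) A := fun c hc =>
    hH.inv_smul_one_sub_eq_cfc fun hmem => (hlt c hmem).not_ge hc
  rw [hres u le_rfl, hH.trace_cfc] at htr
  rw [hres u le_rfl, hres (u + Δ) (by linarith),
    ← cfc_pow _ 2 A (finite_real_spectrum.continuousOn _),
    ← cfc_pow _ 2 A (finite_real_spectrum.continuousOn _),
    hH.dotProduct_cfc_mulVec, hH.dotProduct_cfc_mulVec, hH.trace_cfc, hH.trace_cfc]
  simp only [RCLike.ofReal_real_eq_id, id] at htr ⊢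
  exact inv_sq_weighted_mean_shift_le _ _ (fun i => hlt _ (hH.eigenvalues_mem_spectrum_real i)) htr
    hΔ fun i => sq_nonneg _

theorem regularity_Q2' {n : ℕ} (A : Matrix (Fin n) (Fin n) ℝ) (hA : A.IsSymm)
    (u φ : ℝ) (hφ : 0 < φ)
    (hpos : (u • (1 : Matrix (Fin n) (Fin n) ℝ) - A).PosDef)
    (htr : (u • (1 : Matrix (Fin n) (Fin n) ℝ) - A)⁻¹.trace ≤ φ)
    (Δ : ℝ) (hΔ : 0 ≤ Δ) (x : Fin n → ℝ) :
    (x ⬝ᵥ (((u + Δ) • 1 - A)⁻¹ ^ 2).mulVec x)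
        / (((u + Δ) • (1 : Matrix (Fin n) (Fin n) ℝ) - A)⁻¹ ^ 2).trace
      ≤ (1 + φ * Δ) ^ 2 * ((x ⬝ᵥ ((u • 1 - A)⁻¹ ^ 2).mulVec x)
        / ((u • (1 : Matrix (Fin n) (Fin n) ℝ) - A)⁻¹ ^ 2).trace) :=
  regularity_Q2'_general A hA u φ hpos htr Δ hΔ x
end

section
/- Let A ≺ uI with tr((uI−A)⁻¹) ≤ φ, and let x ∈ ℝⁿ with Q₂'(0,x) ≤ (t−2τ)/(8φ), where 0 < 2τ < t ≤ 1. Then the smaller solution s₀ > 0 of the quadratic equation (1+sφ)² Q₂'(0,x) = s(1−τ) exists and satisfies s₀ ≤ (1+t)·Q₂'(0,x). -/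
/-!
Writing `a = φ²q`, `b = 2φq + τ - 1`, `c = q`, the equation `(1 + sφ)² q = s(1 - τ)` is the
quadratic `a s² + b s + c = 0`. Since `q > 0` (a positive-definite quadratic form over the positive
trace of a positive-definite matrix), `a > 0` and `b < 0 < c`, so the smaller root is positive.
The bound `s₀ ≤ (1 + t) q` follows because the quadratic is nonpositive at `(1 + t) q`, which
reduces to the scalar inequality `(1 + φq(1 + t))² ≤ (1 - τ)(1 + t)` for `8φq ≤ t - 2τ`.
-/

open Matrix

theorem Matrix.PosDef.sq {n K : Type*} [Fintype n] [DecidableEq n] [Field K] [PartialOrder K]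
    [StarRing K] [StarOrderedRing K] {M : Matrix n n K} (hM : M.PosDef) : (M ^ 2).PosDef := by
  have hinj : Function.Injective M.mulVec := mulVec_injective_iff_isUnit.mpr hM.isUnit
  simpa [pow_two, hM.1.eq] using conjTranspose_mul_self M hinj

theorem Matrix.PosDef.dotProduct_mulVec_div_trace_pos {n : Type*} [Fintype n]
    {M : Matrix n n ℝ} (hM : M.PosDef) {x : n → ℝ} (hx : x ≠ 0) :
    0 < x ⬝ᵥ M *ᵥ x / M.trace := by
  have : Nonempty n := by
    by_contra h
    exact hx (funext fun i => (h ⟨i⟩).elim)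
  simpa using div_pos (hM.dotProduct_mulVec_pos hx) hM.trace_pos

section Quadratic

variable {a b c y : ℝ}

noncomputable def quadraticSmallerRoot (a b c : ℝ) : ℝ :=
  (-b - √(discrim a b c)) / (2 * a)

theorem sq_le_discrim_of_quadratic_nonpos (ha : 0 ≤ a) (hy : a * (y * y) + b * y + c ≤ 0) :
    (2 * a * y + b) ^ 2 ≤ discrim a b c := by
  rw [discrim]
  nlinarith [mul_nonneg ha (neg_nonneg.mpr hy)]

theorem quadraticSmallerRoot_isRoot (ha : a ≠ 0) (hD : 0 ≤ discrim a b c) :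
    a * (quadraticSmallerRoot a b c * quadraticSmallerRoot a b c)
      + b * quadraticSmallerRoot a b c + c = 0 :=
  (quadratic_eq_zero_iff ha (Real.mul_self_sqrt hD).symm _).mpr (Or.inr rfl)

theorem quadraticSmallerRoot_le (ha : 0 < a) (hy : a * (y * y) + b * y + c ≤ 0) :
    quadraticSmallerRoot a b c ≤ y := by
  have habs : |2 * a * y + b| ≤ √(discrim a b c) :=
    Real.abs_le_sqrt (sq_le_discrim_of_quadratic_nonpos ha.le hy)
  rw [quadraticSmallerRoot, div_le_iff₀ (by positivity)]
  linarith [neg_abs_le (2 * a * y + b)]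

theorem quadraticSmallerRoot_pos (ha : 0 < a) (hb : b < 0) (hc : 0 < c) :
    0 < quadraticSmallerRoot a b c := by
  have hsqrt : √(discrim a b c) < -b := by
    rw [Real.sqrt_lt' (by linarith), discrim]
    nlinarith [mul_pos ha hc]
  exact div_pos (by linarith) (by positivity)

end Quadratic

theorem sq_one_add_mul_one_add_le {a t τ : ℝ} (ha : 0 ≤ a) (hat : 8 * a ≤ t - 2 * τ)
    (hτ : 0 ≤ τ) (ht : t ≤ 1) : (1 + a * (1 + t)) ^ 2 ≤ (1 - τ) * (1 + t) := by
  have h₀ : 0 ≤ a * (1 + t) := by nlinarith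
  have h₁ : a * (1 + t) ≤ (t - 2 * τ) / 4 := by nlinarith
  nlinarith [mul_nonneg h₀ (by linarith : (0 : ℝ) ≤ 1 / 4 - a * (1 + t)),
    mul_nonneg hτ (by linarith : (0 : ℝ) ≤ 1 - t)]

theorem smaller_root_bound_general {n : ℕ} (A : Matrix (Fin n) (Fin n) ℝ)
    (u φ t τ : ℝ) (hφ : 0 < φ)
    (hpos : (u • (1 : Matrix (Fin n) (Fin n) ℝ) - A).PosDef)
    (hτ : 0 < τ) (hτt : 2 * τ < t) (ht1 : t ≤ 1)
    (x : Fin n → ℝ) (hx : x ≠ 0)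
    (q : ℝ)
    (hq : q = (x ⬝ᵥ ((u • 1 - A)⁻¹ ^ 2).mulVec x)
        / ((u • (1 : Matrix (Fin n) (Fin n) ℝ) - A)⁻¹ ^ 2).trace)
    (hqsmall : q ≤ (t - 2 * τ) / (8 * φ)) :
    ∃ s₀ : ℝ, 0 < s₀ ∧ (1 + s₀ * φ) ^ 2 * q = s₀ * (1 - τ) ∧
      (∀ s : ℝ, (1 + s * φ) ^ 2 * q = s * (1 - τ) → s₀ ≤ s) ∧
      s₀ ≤ (1 + t) * q := by
  have hq₀ : 0 < q := hq ▸ hpos.inv.sq.dotProduct_mulVec_div_trace_pos hx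
  have hφq : 8 * (φ * q) ≤ t - 2 * τ := by
    have := (le_div_iff₀ (by positivity)).mp hqsmall
    linarith
  have hquad : ∀ s, (1 + s * φ) ^ 2 * q = s * (1 - τ) ↔
      φ ^ 2 * q * (s * s) + (2 * φ * q + τ - 1) * s + q = 0 := fun s =>
    ⟨fun h => by linear_combination h, fun h => by linear_combination h⟩
  have hy : φ ^ 2 * q * ((1 + t) * q * ((1 + t) * q)) + (2 * φ * q + τ - 1) * ((1 + t) * q)
      + q ≤ 0 := by
    nlinarith [mul_le_mul_of_nonneg_left
      (sq_one_add_mul_one_add_le (by positivity) hφq hτ.le ht1) hq₀.le]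
  have ha : 0 < φ ^ 2 * q := by positivity
  have hD := (sq_nonneg _).trans (sq_le_discrim_of_quadratic_nonpos ha.le hy)
  refine ⟨_, quadraticSmallerRoot_pos ha (by nlinarith) hq₀,
    (hquad _).mpr (quadraticSmallerRoot_isRoot ha.ne' hD),
    fun s hs => quadraticSmallerRoot_le ha ((hquad s).mp hs).le, quadraticSmallerRoot_le ha hy⟩

theorem smaller_root_bound {n : ℕ} (A : Matrix (Fin n) (Fin n) ℝ) (hA : A.IsSymm)
    (u φ t τ : ℝ) (hφ : 0 < φ)
    (hpos : (u • (1 : Matrix (Fin n) (Fin n) ℝ) - A).PosDef)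
    (htr : (u • (1 : Matrix (Fin n) (Fin n) ℝ) - A)⁻¹.trace ≤ φ)
    (hτ : 0 < τ) (hτt : 2 * τ < t) (ht1 : t ≤ 1)
    (x : Fin n → ℝ) (hx : x ≠ 0)
    (q : ℝ)
    (hq : q = (x ⬝ᵥ ((u • 1 - A)⁻¹ ^ 2).mulVec x)
        / ((u • (1 : Matrix (Fin n) (Fin n) ℝ) - A)⁻¹ ^ 2).trace)
    (hqsmall : q ≤ (t - 2 * τ) / (8 * φ)) :
    ∃ s₀ : ℝ, 0 < s₀ ∧ (1 + s₀ * φ) ^ 2 * q = s₀ * (1 - τ) ∧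
      (∀ s : ℝ, (1 + s * φ) ^ 2 * q = s * (1 - τ) → s₀ ≤ s) ∧
      s₀ ≤ (1 + t) * q :=
  smaller_root_bound_general A u φ t τ hφ hpos hτ hτt ht1 x hx q hq hqsmall
end

section
/- Let ξ₁,…,ξ_n be positive random variables with E ξᵢ = 1 satisfying P{Σ_{i∈S} ξᵢ ≥ t} ≤ C t^{−1−η} for all subsets S ⊆ [n] and all t > C|S|, for some C, η > 0. Let μ₁,…,μ_n > 0 with Σᵢ 1/μᵢ ≤ 1, and let K ≥ 4C. Let μ be the minimal nonnegative number such that Σᵢ ξᵢ/(μᵢ + μ) ≤ K. Then E μ ≤ C(4+4/η)^{3+η} / (K/4)^{1+η}. -/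
/-!
Group the indices into dyadic blocks `S_j = {i | 2^j ≤ μᵢ < 2^(j+1)}` and give block `j` the
weight `w_j = (Σ_{S_j} 1/μᵢ + (1 - θ) θ^j) / 2`, so that `Σ_j w_j ≤ 1`. If `μ > s`, then `s` is
not an admissible shift, so `Σᵢ ξᵢ/(μᵢ + s) > K`, and some block must carry its share:
`Σ_{S_j} ξᵢ ≥ K w_j (2^j + s)`. The first half of `w_j` makes this threshold exceed `C |S_j|`, so
the tail hypothesis bounds the probability by `C (K w_j (2^j + s))^(-1-η)`; the second half bounds
`w_j` below by a geometric sequence. Integrating in `s` (layer cake) gives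
`E μ ≲ Σ_j θ^(-j(1+η)) 2^(-jη)`, and the choice `θ = 2^(-x)` with `x (1 + η) = η / 2` makes this a
geometric series of ratio `2^(-η/2)`.
-/

open MeasureTheory Finset Real

lemma div_two_add_le_one_sub_two_rpow_neg {x : ℝ} (hx : 0 ≤ x) :
    x / (2 + x) ≤ 1 - (2 : ℝ) ^ (-x) := by
  have h : 1 + x / 2 ≤ (2 : ℝ) ^ x := by
    rw [rpow_def_of_pos two_pos]
    nlinarith [add_one_le_exp (log 2 * x), log_two_gt_d9]
  rw [rpow_neg zero_le_two, div_le_iff₀ (by positivity)]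
  have h2 : 0 < (2 : ℝ) ^ x := by positivity
  field_simp
  nlinarith

lemma sum_pow_le_inv_one_sub {r : ℝ} (h0 : 0 ≤ r) (h1 : r < 1) (J : Finset ℕ) :
    ∑ j ∈ J, r ^ j ≤ (1 - r)⁻¹ :=
  tsum_geometric_of_lt_one h0 h1 ▸
    (summable_geometric_of_lt_one h0 h1).sum_le_tsum J fun j _ => pow_nonneg h0 j

lemma two_rpow_neg_pow_rpow_mul {x η : ℝ} (hx : x * (1 + η) = η / 2) (j : ℕ) :
    (((2 : ℝ) ^ (-x)) ^ j) ^ (-1 - η) * ((2 : ℝ) ^ j) ^ (-η) = ((2 : ℝ) ^ (-(η / 2))) ^ j := by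
  rw [← rpow_pow_comm (by positivity), ← rpow_pow_comm zero_le_two, ← rpow_mul zero_le_two,
    ← mul_pow, ← rpow_add two_pos]
  congr 2
  linear_combination hx

lemma integral_Ioi_zero_comp_const_add {E : Type*} [NormedAddCommGroup E] [NormedSpace ℝ E]
    (f : ℝ → E) (c : ℝ) :
    ∫ s in Set.Ioi 0, f (c + s) = ∫ t in Set.Ioi c, f t := by
  have := (measurePreserving_add_left volume c).setIntegral_preimage_emb
    (measurableEmbedding_addLeft c) f (Set.Ioi c)
  simpa [Function.comp_def] using this

lemma integrableOn_Ioi_zero_comp_const_add_iff {E : Type*} [NormedAddCommGroup E] (f : ℝ → E)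
    (c : ℝ) :
    IntegrableOn (fun s => f (c + s)) (Set.Ioi 0) ↔ IntegrableOn f (Set.Ioi c) := by
  have := (measurePreserving_add_left volume c).integrableOn_comp_preimage
    (measurableEmbedding_addLeft c) (f := f) (s := Set.Ioi c)
  simpa [Function.comp_def] using this

lemma integrableOn_Ioi_const_add_rpow {c r : ℝ} (hc : 0 < c) (hr : r < -1) :
    IntegrableOn (fun s => (c + s) ^ r) (Set.Ioi 0) :=
  (integrableOn_Ioi_zero_comp_const_add_iff (· ^ r) c).2 (integrableOn_Ioi_rpow_of_lt hr hc)

lemma integral_Ioi_const_add_rpow {c r : ℝ} (hc : 0 < c) (hr : r < -1) :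
    ∫ s in Set.Ioi 0, (c + s) ^ r = -c ^ (r + 1) / (r + 1) := by
  rw [integral_Ioi_zero_comp_const_add (· ^ r), integral_Ioi_rpow_of_lt hr hc]

lemma integral_le_setIntegral_Ioi_of_measureReal_lt_le {Ω : Type*} [MeasurableSpace Ω]
    {P : Measure Ω} [IsFiniteMeasure P] {f : Ω → ℝ} (hf : 0 ≤ f) {G : ℝ → ℝ}
    (hG : IntegrableOn G (Set.Ioi 0)) (hfG : ∀ t ∈ Set.Ioi 0, P.real {ω | t < f ω} ≤ G t) :
    ∫ ω, f ω ∂P ≤ ∫ t in Set.Ioi 0, G t := by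
  by_cases hfi : Integrable f P
  swap
  · rw [integral_undef hfi]
    exact setIntegral_nonneg measurableSet_Ioi fun t ht => measureReal_nonneg.trans (hfG t ht)
  have hmeas : Measurable fun t : ℝ => P.real {ω | t < f ω} :=
    Antitone.measurable fun t u htu => measureReal_mono fun ω hω => htu.trans_lt hω
  have hint : IntegrableOn (fun t => P.real {ω | t < f ω}) (Set.Ioi 0) := by
    refine hG.mono' hmeas.aestronglyMeasurable ((ae_restrict_iff' measurableSet_Ioi).2 ?_)
    exact ae_of_all _ fun t ht => (Real.norm_of_nonneg measureReal_nonneg).trans_le (hfG t ht)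
  rw [hfi.integral_eq_integral_meas_lt (ae_of_all _ hf)]
  exact setIntegral_mono_on hint hG measurableSet_Ioi hfG

lemma integral_le_sum_of_measureReal_lt_le_sum_rpow {Ω κ : Type*} [MeasurableSpace Ω]
    {P : Measure Ω} [IsFiniteMeasure P] {f : Ω → ℝ} (hf : 0 ≤ f) {J : Finset κ} {c ℓ : κ → ℝ}
    (hℓ : ∀ j ∈ J, 0 < ℓ j) {η : ℝ} (hη : 0 < η)
    (htail : ∀ t ∈ Set.Ioi 0, P.real {ω | t < f ω} ≤ ∑ j ∈ J, c j * (ℓ j + t) ^ (-1 - η)) :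
    ∫ ω, f ω ∂P ≤ ∑ j ∈ J, c j * ℓ j ^ (-η) / η := by
  have hint : ∀ j ∈ J, IntegrableOn (fun t => c j * (ℓ j + t) ^ (-1 - η)) (Set.Ioi 0) :=
    fun j hj => (integrableOn_Ioi_const_add_rpow (hℓ j hj) (by linarith)).const_mul (c j)
  refine (integral_le_setIntegral_Ioi_of_measureReal_lt_le hf (integrable_finsetSum _ hint)
    htail).trans_eq ?_
  rw [integral_finsetSum _ hint]
  refine sum_congr rfl fun j hj => ?_
  rw [integral_const_mul, integral_Ioi_const_add_rpow (hℓ j hj) (by linarith),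
    show -1 - η + 1 = -η by ring]
  ring

lemma card_le_mul_sum_inv {ι : Type*} (s : Finset ι) {m : ι → ℝ} {c : ℝ}
    (h : ∀ i ∈ s, 0 < m i ∧ m i ≤ c) : (#s : ℝ) ≤ c * ∑ i ∈ s, (m i)⁻¹ := by
  rw [mul_sum, card_eq_sum_ones, Nat.cast_sum, Nat.cast_one]
  refine sum_le_sum fun i hi => ?_
  rw [← div_eq_mul_inv, one_le_div (h i hi).1]
  exact (h i hi).2

lemma exists_mul_lt_sum_fiber_of_lt_sum_div {ι κ : Type*} [Fintype ι] [DecidableEq κ] {x m : ι → ℝ}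
    (hx : ∀ i, 0 ≤ x i) (b : ι → κ) {ℓ w : κ → ℝ} (hℓ : ∀ i, 0 < ℓ (b i) ∧ ℓ (b i) ≤ m i)
    (hw : ∑ j ∈ univ.image b, w j ≤ 1) {K : ℝ} (hK : 0 ≤ K) (hKx : K < ∑ i, x i / m i) :
    ∃ j ∈ univ.image b, K * w j * ℓ j < ∑ i with b i = j, x i := by
  have hsum : ∑ j ∈ univ.image b, K * w j < ∑ j ∈ univ.image b, (∑ i with b i = j, x i) / ℓ j :=
    calc ∑ j ∈ univ.image b, K * w j ≤ K := by
          rw [← mul_sum]; exact mul_le_of_le_one_right hK hw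
      _ < ∑ i, x i / m i := hKx
      _ = ∑ j ∈ univ.image b, ∑ i with b i = j, x i / m i :=
          (sum_fiberwise_of_maps_to (fun i _ => mem_image_of_mem b (mem_univ i)) _).symm
      _ ≤ _ := by
          refine sum_le_sum fun j _ => ?_
          rw [sum_div]
          refine sum_le_sum fun i hi => ?_
          obtain rfl := (mem_filter.1 hi).2
          exact div_le_div_of_nonneg_left (hx i) (hℓ i).1 (hℓ i).2
  obtain ⟨j, hj, hlt⟩ := exists_lt_of_sum_lt hsum
  obtain ⟨i, -, rfl⟩ := mem_image.1 hj
  exact ⟨b i, hj, (lt_div_iff₀ (hℓ i).1).1 hlt⟩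

noncomputable def dyadicScale (m : ℝ) : ℕ := ⌊logb 2 m⌋₊

lemma two_pow_dyadicScale_le {m : ℝ} (hm : 1 ≤ m) : (2 : ℝ) ^ dyadicScale m ≤ m := by
  rw [← rpow_natCast, ← le_logb_iff_rpow_le one_lt_two (by linarith)]
  exact Nat.floor_le (logb_nonneg one_lt_two hm)

lemma lt_two_pow_dyadicScale_succ {m : ℝ} (hm : 0 < m) : m < (2 : ℝ) ^ (dyadicScale m + 1) := by
  rw [← rpow_natCast, ← logb_lt_iff_lt_rpow one_lt_two hm, Nat.cast_succ]
  exact Nat.lt_floor_add_one _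

section DyadicWeights

variable {ι : Type*} [Fintype ι] (μs : ι → ℝ) (θ : ℝ)

noncomputable def dyadicWeight (j : ℕ) : ℝ :=
  ((∑ i with dyadicScale (μs i) = j, (μs i)⁻¹) + (1 - θ) * θ ^ j) / 2

variable {μs θ}

lemma sum_dyadicWeight_le_one (hμsum : ∑ i, (μs i)⁻¹ ≤ 1)
    (hθ0 : 0 ≤ θ) (hθ1 : θ < 1) :
    ∑ j ∈ univ.image fun i => dyadicScale (μs i), dyadicWeight μs θ j ≤ 1 := by
  have hblocks : ∑ j ∈ univ.image fun i => dyadicScale (μs i),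
      ∑ i with dyadicScale (μs i) = j, (μs i)⁻¹ = ∑ i, (μs i)⁻¹ :=
    sum_fiberwise_of_maps_to (fun i _ => mem_image_of_mem _ (mem_univ i)) _
  have hgeom : ∑ j ∈ univ.image fun i => dyadicScale (μs i), (1 - θ) * θ ^ j ≤ 1 := by
    rw [← mul_sum]
    calc (1 - θ) * ∑ j ∈ _, θ ^ j ≤ (1 - θ) * (1 - θ)⁻¹ :=
          mul_le_mul_of_nonneg_left (sum_pow_le_inv_one_sub hθ0 hθ1 _) (by linarith)
      _ = 1 := mul_inv_cancel₀ (by linarith)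
  simp only [dyadicWeight, ← sum_div, sum_add_distrib, hblocks]
  linarith

lemma half_mul_pow_le_dyadicWeight (hμs : ∀ i, 0 < μs i) (j : ℕ) :
    (1 - θ) * θ ^ j / 2 ≤ dyadicWeight μs θ j := by
  have : 0 ≤ ∑ i with dyadicScale (μs i) = j, (μs i)⁻¹ :=
    sum_nonneg fun i _ => (inv_pos.2 (hμs i)).le
  unfold dyadicWeight
  linarith

lemma card_lt_four_mul_two_pow_mul_dyadicWeight (hμs : ∀ i, 0 < μs i) (hθ0 : 0 < θ)
    (hθ1 : θ < 1) (j : ℕ) :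
    (#{i | dyadicScale (μs i) = j} : ℝ) < 4 * 2 ^ j * dyadicWeight μs θ j := by
  have hcard := card_le_mul_sum_inv {i | dyadicScale (μs i) = j} (m := μs) (c := 2 ^ (j + 1))
    fun i hi => ⟨hμs i, (mem_filter.1 hi).2 ▸ (lt_two_pow_dyadicScale_succ (hμs i)).le⟩
  have hg : 0 < (1 - θ) * θ ^ j * 2 ^ j := by
    have : 0 < 1 - θ := by linarith
    positivity
  unfold dyadicWeight
  rw [pow_succ] at hcard
  linarith

end DyadicWeights

def IsMinimalShift {ι : Type*} [Fintype ι] (x μs : ι → ℝ) (K s : ℝ) : Prop :=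
  IsLeast {m : ℝ | 0 ≤ m ∧ ∑ i, x i / (μs i + m) ≤ K} s

section MinimalShift

variable {Ω ι : Type*} [MeasurableSpace Ω] [Fintype ι] {P : Measure Ω} [IsFiniteMeasure P]
  {ξ : ι → Ω → ℝ} {μs : ι → ℝ} {K : ℝ} {μ : Ω → ℝ}

lemma measureReal_lt_minimalShift_le_sum_fiber (hξ : ∀ i ω, 0 ≤ ξ i ω) (hK : 0 ≤ K)
    (hμ : ∀ ω, IsMinimalShift (ξ · ω) μs K (μ ω))
    {κ : Type*} [DecidableEq κ] (b : ι → κ) {ℓ w : κ → ℝ}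
    (hℓ : ∀ i, 0 < ℓ (b i) ∧ ℓ (b i) ≤ μs i) (hw : ∑ j ∈ univ.image b, w j ≤ 1)
    {s : ℝ} (hs : 0 ≤ s) :
    P.real {ω | s < μ ω} ≤
      ∑ j ∈ univ.image b, P.real {ω | K * w j * (ℓ j + s) ≤ ∑ i with b i = j, ξ i ω} := by
  refine (measureReal_mono (fun ω hω => ?_) (measure_ne_top _ _)).trans
    (measureReal_biUnion_finset_le _ _)
  have hK_lt : K < ∑ i, ξ i ω / (μs i + s) := by
    by_contra! hle
    exact (not_le.2 hω) ((hμ ω).2 ⟨hs, hle⟩)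
  obtain ⟨j, hj, hlt⟩ := exists_mul_lt_sum_fiber_of_lt_sum_div (hξ · ω) b (ℓ := fun j => ℓ j + s)
    (fun i => ⟨by linarith [hℓ i], by linarith [hℓ i]⟩) hw hK hK_lt
  exact Set.mem_iUnion₂.2 ⟨j, hj, hlt.le⟩

lemma measureReal_lt_minimalShift_le_sum_dyadic (hξ : ∀ i ω, 0 ≤ ξ i ω) {C η : ℝ} (hC : 0 < C)
    (hη : 0 < η)
    (htail : ∀ S : Finset ι, ∀ t : ℝ, C * #S < t →
      P.real {ω | t ≤ ∑ i ∈ S, ξ i ω} ≤ C * t ^ (-1 - η))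
    (hμs : ∀ i, 0 < μs i) (hμsum : ∑ i, (μs i)⁻¹ ≤ 1) (hK : 4 * C ≤ K)
    (hμ : ∀ ω, IsMinimalShift (ξ · ω) μs K (μ ω))
    {θ : ℝ} (hθ0 : 0 < θ) (hθ1 : θ < 1) {s : ℝ} (hs : 0 ≤ s) :
    P.real {ω | s < μ ω} ≤ ∑ j ∈ univ.image fun i => dyadicScale (μs i),
      C * (K * (1 - θ) / 2 * θ ^ j) ^ (-1 - η) * ((2 : ℝ) ^ j + s) ^ (-1 - η) := by
  have hμ1 : ∀ i, 1 ≤ μs i := fun i => (inv_le_one₀ (hμs i)).1 <|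
    (single_le_sum (fun i _ => (inv_pos.2 (hμs i)).le) (mem_univ i)).trans hμsum
  refine (measureReal_lt_minimalShift_le_sum_fiber hξ (by linarith) hμ _ (ℓ := fun j => 2 ^ j)
    (fun i => ⟨by positivity, two_pow_dyadicScale_le (hμ1 i)⟩)
    (sum_dyadicWeight_le_one hμsum hθ0.le hθ1) hs).trans (sum_le_sum fun j _ => ?_)
  have hw := half_mul_pow_le_dyadicWeight hμs (θ := θ) j
  have hg : 0 < K * (1 - θ) / 2 * θ ^ j := by
    have : 0 < 1 - θ := by linarith
    have : 0 < K := by linarith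
    positivity
  have hthreshold : C * #{i | dyadicScale (μs i) = j} < K * dyadicWeight μs θ j * (2 ^ j + s) :=
    calc C * #{i | dyadicScale (μs i) = j} ≤ K / 4 * #{i | dyadicScale (μs i) = j} := by
          gcongr; linarith
      _ < K / 4 * (4 * 2 ^ j * dyadicWeight μs θ j) := by
          gcongr
          · linarith
          · exact card_lt_four_mul_two_pow_mul_dyadicWeight hμs hθ0 hθ1 j
      _ ≤ K * dyadicWeight μs θ j * (2 ^ j + s) := by
          have : 0 ≤ K * dyadicWeight μs θ j := by nlinarith
          nlinarith
  calc P.real _ ≤ C * (K * dyadicWeight μs θ j * (2 ^ j + s)) ^ (-1 - η) := htail _ _ hthreshold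
    _ ≤ C * (K * (1 - θ) / 2 * θ ^ j * (2 ^ j + s)) ^ (-1 - η) := by
        gcongr C * ?_
        refine rpow_le_rpow_of_nonpos (by positivity) ?_ (by linarith)
        have : 0 < K := by linarith
        calc K * (1 - θ) / 2 * θ ^ j * (2 ^ j + s) = K * ((1 - θ) * θ ^ j / 2) * (2 ^ j + s) := by
              ring
          _ ≤ _ := by gcongr
    _ = _ := by rw [mul_rpow hg.le (by positivity), mul_assoc]

lemma integral_minimalShift_le (hξ : ∀ i ω, 0 ≤ ξ i ω) {C η : ℝ} (hC : 0 < C)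
    (hη : 0 < η) (htail : ∀ S : Finset ι, ∀ t : ℝ, C * #S < t →
      P.real {ω | t ≤ ∑ i ∈ S, ξ i ω} ≤ C * t ^ (-1 - η))
    (hμs : ∀ i, 0 < μs i) (hμsum : ∑ i, (μs i)⁻¹ ≤ 1) (hK : 4 * C ≤ K)
    (hμ : ∀ ω, IsMinimalShift (ξ · ω) μs K (μ ω))
    {x : ℝ} (hx : x * (1 + η) = η / 2) :
    ∫ ω, μ ω ∂P ≤
      C / η * (K * (1 - (2 : ℝ) ^ (-x)) / 2) ^ (-1 - η) * (1 - (2 : ℝ) ^ (-(η / 2)))⁻¹ := by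
  have hx0 : 0 < x := pos_of_mul_pos_left (hx.trans_gt (by positivity)) (by linarith)
  have hgeom := two_rpow_neg_pow_rpow_mul hx
  set θ := (2 : ℝ) ^ (-x)
  have hθ1 : θ < 1 := rpow_lt_one_of_one_lt_of_neg one_lt_two (by linarith)
  have hA : 0 < K * (1 - θ) / 2 := by
    have : 0 < K := by linarith
    have : 0 < 1 - θ := by linarith
    positivity
  set J := univ.image fun i => dyadicScale (μs i)
  calc ∫ ω, μ ω ∂P ≤ ∑ j ∈ J, C * (K * (1 - θ) / 2 * θ ^ j) ^ (-1 - η) * ((2 : ℝ) ^ j) ^ (-η) / η :=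
        integral_le_sum_of_measureReal_lt_le_sum_rpow (fun ω => (hμ ω).1.1)
          (fun j _ => by positivity) hη fun s hs => measureReal_lt_minimalShift_le_sum_dyadic
            hξ hC hη htail hμs hμsum hK hμ (by positivity) hθ1 (le_of_lt hs)
    _ = C / η * (K * (1 - θ) / 2) ^ (-1 - η) * ∑ j ∈ J, ((2 : ℝ) ^ (-(η / 2))) ^ j := by
        rw [mul_sum]
        refine sum_congr rfl fun j _ => ?_
        rw [mul_rpow hA.le (by positivity), ← hgeom j]
        ring
    _ ≤ _ := by
        gcongr
        exact sum_pow_le_inv_one_sub (by positivity)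
          (rpow_lt_one_of_one_lt_of_neg one_lt_two (by linarith)) J

end MinimalShift

lemma div_mul_rpow_mul_inv_le {C η K a b : ℝ} (hC : 0 ≤ C) (hη : 0 < η) (hK : 0 < K)
    (ha : η / (4 + 5 * η) ≤ a) (hb : η / (4 + η) ≤ b) :
    C / η * (K * a / 2) ^ (-1 - η) * b⁻¹ ≤ C * (4 + 4 / η) ^ (3 + η) / (K / 4) ^ (1 + η) := by
  have hB : 4 + 4 / η = 4 * (1 + η) / η := by field_simp; ring
  have hB0 : 0 < 4 + 4 / η := by positivity
  have ha0 : 0 < a := lt_of_lt_of_le (by positivity) ha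
  have hb0 : 0 < b := lt_of_lt_of_le (by positivity) hb
  have hfirst : (K * a / 2) ^ (-1 - η) ≤ ((4 + 4 / η) / (K / 4)) ^ (1 + η) := by
    have hlow : K / 4 / (4 + 4 / η) ≤ K * a / 2 := by
      calc K / 4 / (4 + 4 / η) = K * (η / (8 * (1 + η))) / 2 := by rw [hB]; field_simp; ring
        _ ≤ K * (η / (4 + 5 * η)) / 2 := by gcongr; linarith
        _ ≤ K * a / 2 := by gcongr
    calc _ ≤ (K / 4 / (4 + 4 / η)) ^ (-1 - η) :=
          rpow_le_rpow_of_nonpos (by positivity) hlow (by linarith)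
      _ = _ := by
          rw [show -1 - η = -(1 + η) by ring, rpow_neg (by positivity), ← inv_rpow (by positivity),
            inv_div]
  have hsecond : C / η * b⁻¹ ≤ C * (4 + 4 / η) ^ 2 := by
    calc C / η * b⁻¹ ≤ C / η * (η / (4 + η))⁻¹ := by gcongr
      _ = C * ((4 + η) / η ^ 2) := by field_simp
      _ ≤ C * (4 + 4 / η) ^ 2 := by
          rw [hB, div_pow]
          gcongr
          nlinarith
  have hsplit : C * (4 + 4 / η) ^ (3 + η) / (K / 4) ^ (1 + η)
      = C * (4 + 4 / η) ^ 2 * ((4 + 4 / η) / (K / 4)) ^ (1 + η) := by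
    rw [div_rpow (x := 4 + 4 / η) hB0.le (by positivity), show 3 + η = 2 + (1 + η) by ring,
      rpow_add hB0, rpow_two]
    ring
  rw [hsplit]
  calc _ = C / η * b⁻¹ * (K * a / 2) ^ (-1 - η) := by ring
    _ ≤ _ := mul_le_mul hsecond hfirst (by positivity) (by positivity)

theorem shift_inverse_problem_general {n : ℕ}
    {Ω : Type*} [MeasureSpace Ω] [IsProbabilityMeasure (volume : Measure Ω)]
    (ξ : Fin n → Ω → ℝ)
    (hpos : ∀ i ω, 0 < ξ i ω)
    (C η : ℝ) (hC : 0 < C) (hη : 0 < η)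
    (htail : ∀ S : Finset (Fin n), ∀ t : ℝ, C * S.card < t →
      (volume {ω | t ≤ ∑ i ∈ S, ξ i ω}).toReal ≤ C * t ^ (-1 - η))
    (μs : Fin n → ℝ) (hμs : ∀ i, 0 < μs i) (hμsum : ∑ i, (μs i)⁻¹ ≤ 1)
    (K : ℝ) (hK : 4 * C ≤ K)
    (μ : Ω → ℝ)
    (hμ : ∀ ω, IsLeast {m : ℝ | 0 ≤ m ∧ ∑ i, ξ i ω / (μs i + m) ≤ K} (μ ω)) :
    ∫ ω, μ ω ≤ C * (4 + 4 / η) ^ (3 + η) / (K / 4) ^ (1 + η) := by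
  refine (integral_minimalShift_le (fun i ω => (hpos i ω).le) hC hη htail hμs hμsum hK
    hμ (x := η / (2 * (1 + η))) (by field_simp)).trans
    (div_mul_rpow_mul_inv_le hC.le hη (by linarith) ?_ ?_)
  · convert div_two_add_le_one_sub_two_rpow_neg (x := η / (2 * (1 + η))) (by positivity) using 1
    field_simp
    ring
  · convert div_two_add_le_one_sub_two_rpow_neg (x := η / 2) (by positivity) using 1
    field_simp
    norm_num

theorem shift_inverse_problem {n : ℕ}
    {Ω : Type*} [MeasureSpace Ω] [IsProbabilityMeasure (volume : Measure Ω)]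
    (ξ : Fin n → Ω → ℝ) (hmeas : ∀ i, Measurable (ξ i))
    (hpos : ∀ i ω, 0 < ξ i ω)
    (hint : ∀ i, Integrable (ξ i)) (hmean : ∀ i, ∫ ω, ξ i ω = 1)
    (C η : ℝ) (hC : 0 < C) (hη : 0 < η)
    (htail : ∀ S : Finset (Fin n), ∀ t : ℝ, C * S.card < t →
      (volume {ω | t ≤ ∑ i ∈ S, ξ i ω}).toReal ≤ C * t ^ (-1 - η))
    (μs : Fin n → ℝ) (hμs : ∀ i, 0 < μs i) (hμsum : ∑ i, (μs i)⁻¹ ≤ 1)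
    (K : ℝ) (hK : 4 * C ≤ K)
    (μ : Ω → ℝ)
    (hμ : ∀ ω, IsLeast {m : ℝ | 0 ≤ m ∧ ∑ i, ξ i ω / (μs i + m) ≤ K} (μ ω)) :
    ∫ ω, μ ω ≤ C * (4 + 4 / η) ^ (3 + η) / (K / 4) ^ (1 + η) :=
  shift_inverse_problem_general ξ hpos C η hC hη htail μs hμs hμsum K hK μ hμ
end

section
/- Let Z₁,…,Z_N be independent random variables with E Zᵢ = 1 and P{|Zᵢ| > t} ≤ C t^{−1−η} for all t > 0, for some C, η > 0. If ε ∈ (0,1) and N ≥ (2C)^{2/η}(1+1/η)^{2/η}/(ε/2)^{2+2/η}, then E|(1/N)Σᵢ Zᵢ − 1| ≤ ε. -/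
/-!
Write `Zᵢ = Xᵢ + Yᵢ`, where `Xᵢ = truncAbs K Zᵢ` is `Zᵢ` cut off where `|Zᵢ| > K`, with
`K = (ε/2)√N`. The `Xᵢ` are independent and bounded by `K`, so their centred sum has variance at
most `N K²` and, by Cauchy–Schwarz, mean absolute value at most `√N K`; after dividing by `N`
this is `ε/2`. The layer-cake formula and the tail bound give `E|Yᵢ| ≤ C (1 + 1/η) K^(-η)`, and
the lower bound on `N` makes this at most `ε/4`; centring `Yᵢ` costs a factor `2`.
-/

open MeasureTheory ProbabilityTheory Set

noncomputable def truncAbs (K x : ℝ) : ℝ := if |x| ≤ K then x else 0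

lemma measurable_truncAbs (K : ℝ) : Measurable (truncAbs K) :=
  Measurable.ite (measurableSet_le measurable_abs measurable_const) measurable_id measurable_const

lemma abs_truncAbs_le_abs (K x : ℝ) : |truncAbs K x| ≤ |x| := by
  unfold truncAbs; split_ifs <;> simp

lemma abs_truncAbs_le {K : ℝ} (hK : 0 ≤ K) (x : ℝ) : |truncAbs K x| ≤ K := by
  unfold truncAbs; split_ifs with h <;> simp [h, hK]

lemma max_lt_abs_of_lt_abs_sub_truncAbs {K t x : ℝ} (ht : 0 ≤ t)
    (h : t < |x - truncAbs K x|) : max t K < |x| := by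
  unfold truncAbs at h
  split_ifs at h with hx
  · simp at h; linarith
  · simp only [sub_zero] at h; exact max_lt h (not_le.1 hx)

lemma eqOn_max_rpow_Ioc (K a : ℝ) :
    EqOn (fun t => max t K ^ a) (fun _ => K ^ a) (Ioc 0 K) :=
  fun _ ht => by simp only [max_eq_right ht.2]

lemma eqOn_max_rpow_Ioi (K a : ℝ) :
    EqOn (fun t => max t K ^ a) (fun t => t ^ a) (Ioi K) :=
  fun _ ht => by simp only [max_eq_left (le_of_lt (mem_Ioi.1 ht))]

lemma integrableOn_Ioi_max_rpow {η K : ℝ} (hη : 0 < η) (hK : 0 < K) :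
    IntegrableOn (fun t => max t K ^ (-1 - η)) (Ioi 0) := by
  rw [← Ioc_union_Ioi_eq_Ioi hK.le]
  exact ((integrableOn_const measure_Ioc_lt_top.ne).congr_fun
      (eqOn_max_rpow_Ioc K _).symm measurableSet_Ioc).union
    ((integrableOn_Ioi_rpow_of_lt (by linarith) hK).congr_fun
      (eqOn_max_rpow_Ioi K _).symm measurableSet_Ioi)

lemma integral_Ioi_max_rpow {η K : ℝ} (hη : 0 < η) (hK : 0 < K) :
    ∫ t in Ioi 0, max t K ^ (-1 - η) = (1 + 1 / η) * K ^ (-η) := by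
  have hint := integrableOn_Ioi_max_rpow hη hK
  rw [← Ioc_union_Ioi_eq_Ioi hK.le] at hint ⊢
  rw [setIntegral_union (Ioc_disjoint_Ioi le_rfl) measurableSet_Ioi
      (hint.mono_set subset_union_left) (hint.mono_set subset_union_right),
    setIntegral_congr_fun measurableSet_Ioc (eqOn_max_rpow_Ioc K _),
    setIntegral_congr_fun measurableSet_Ioi (eqOn_max_rpow_Ioi K _),
    setIntegral_const, integral_Ioi_rpow_of_lt (by linarith) hK,
    Real.volume_real_Ioc_of_le hK.le, smul_eq_mul, sub_zero,
    show -1 - η + 1 = -η by ring, show -1 - η = -η - 1 by ring, Real.rpow_sub_one hK.ne']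
  field_simp

section

variable {Ω : Type*} [MeasurableSpace Ω] {μ : Measure Ω}

lemma MeasureTheory.Integrable.truncAbs_comp {g : Ω → ℝ} (hg : Integrable g μ) (K : ℝ) :
    Integrable (fun ω => truncAbs K (g ω)) μ :=
  hg.mono ((measurable_truncAbs K).comp_aemeasurable hg.aemeasurable).aestronglyMeasurable
    (ae_of_all _ fun ω => by simpa only [Real.norm_eq_abs] using abs_truncAbs_le_abs K (g ω))

theorem integral_abs_sub_truncAbs_le [IsFiniteMeasure μ] {g : Ω → ℝ} (hg : Integrable g μ)
    {C η K : ℝ} (hη : 0 < η) (hK : 0 < K)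
    (htail : ∀ t, 0 < t → μ.real {ω | t < |g ω|} ≤ C * t ^ (-1 - η)) :
    ∫ ω, |g ω - truncAbs K (g ω)| ∂μ ≤ C * (1 + 1 / η) * K ^ (-η) := by
  have hint : Integrable (fun ω => |g ω - truncAbs K (g ω)|) μ :=
    (hg.sub (hg.truncAbs_comp K)).abs
  have hlevel : ∀ t ∈ Ioi (0 : ℝ),
      μ.real {ω | t < |g ω - truncAbs K (g ω)|} ≤ C * max t K ^ (-1 - η) := fun t ht =>
    (measureReal_mono fun ω hω => max_lt_abs_of_lt_abs_sub_truncAbs (le_of_lt ht) hω).trans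
      (htail _ (lt_max_of_lt_right hK))
  rw [hint.integral_eq_integral_meas_lt (ae_of_all _ fun ω => abs_nonneg _)]
  calc _ ≤ ∫ t in Ioi 0, C * max t K ^ (-1 - η) :=
        integral_mono_of_nonneg (ae_of_all _ fun _ => measureReal_nonneg)
          ((integrableOn_Ioi_max_rpow hη hK).const_mul C)
          ((ae_restrict_iff' measurableSet_Ioi).2 (ae_of_all _ hlevel))
    _ = C * (1 + 1 / η) * K ^ (-η) := by
        rw [integral_const_mul, integral_Ioi_max_rpow hη hK, mul_assoc]

theorem integral_abs_sub_integral_le_sqrt_variance [IsProbabilityMeasure μ] {X : Ω → ℝ}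
    (hX : MemLp X 2 μ) : ∫ ω, |X ω - μ[X]| ∂μ ≤ √(Var[X; μ]) := by
  set f : Ω → ℝ := fun ω => |X ω - μ[X]|
  have hf : MemLp f 2 μ := (hX.sub (memLp_const _)).abs
  -- `0 ≤ Var[f]` is the Cauchy–Schwarz inequality `(∫ f)² ≤ ∫ f²`.
  have hsq : (∫ ω, f ω ∂μ) ^ 2 ≤ Var[X; μ] := by
    have := variance_nonneg f μ
    rw [variance_eq_sub hf] at this
    rw [variance_eq_integral hX.aemeasurable]
    simpa [f, sq_abs] using this
  exact Real.le_sqrt_of_sq_le hsq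

theorem integral_abs_sub_integral_le_two_mul [IsProbabilityMeasure μ] {f : Ω → ℝ}
    (hf : Integrable f μ) : ∫ ω, |f ω - μ[f]| ∂μ ≤ 2 * ∫ ω, |f ω| ∂μ := by
  calc ∫ ω, |f ω - μ[f]| ∂μ ≤ ∫ ω, (|f ω| + |μ[f]|) ∂μ :=
        integral_mono (hf.sub (integrable_const _)).abs (hf.abs.add (integrable_const _))
          fun ω => abs_sub _ _
    _ = ∫ ω, |f ω| ∂μ + |μ[f]| := by rw [integral_add hf.abs (integrable_const _)]; simp
    _ ≤ 2 * ∫ ω, |f ω| ∂μ := by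
        have := abs_integral_le_integral_abs (f := f) (μ := μ)
        linarith

theorem integral_abs_sum_sub_integral_le_of_abs_le [IsProbabilityMeasure μ] {ι : Type*}
    {X : ι → Ω → ℝ} {s : Finset ι} {K : ℝ} (hK : 0 ≤ K) (hX : ∀ i ∈ s, AEMeasurable (X i) μ)
    (hbound : ∀ i ∈ s, ∀ᵐ ω ∂μ, |X i ω| ≤ K)
    (hindep : Set.Pairwise ↑s fun i j => X i ⟂ᵢ[μ] X j) :
    ∫ ω, |∑ i ∈ s, (X i ω - μ[X i])| ∂μ ≤ √s.card * K := by
  have hmem : ∀ i ∈ s, MemLp (X i) 2 μ := fun i hi =>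
    MemLp.of_bound (hX i hi).aestronglyMeasurable K
      (by simpa only [Real.norm_eq_abs] using hbound i hi)
  have hvar : ∀ i ∈ s, Var[X i; μ] ≤ K ^ 2 := fun i hi => by
    simpa using variance_le_sq_of_bounded ((hbound i hi).mono fun ω => abs_le.1) (hX i hi)
  have hsum : ∀ ω, ∑ i ∈ s, (X i ω - μ[X i]) = (∑ i ∈ s, X i) ω - μ[∑ i ∈ s, X i] := by
    intro ω
    simp only [Finset.sum_apply]
    rw [integral_finsetSum _ fun i hi => (hmem i hi).integrable one_le_two,
      Finset.sum_sub_distrib]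
  simp_rw [hsum]
  calc _ ≤ √(Var[∑ i ∈ s, X i; μ]) :=
        integral_abs_sub_integral_le_sqrt_variance (memLp_finsetSum' _ hmem)
    _ = √(∑ i ∈ s, Var[X i; μ]) := by rw [IndepFun.variance_sum hmem hindep]
    _ ≤ √(∑ i ∈ s, K ^ 2) := Real.sqrt_le_sqrt (Finset.sum_le_sum hvar)
    _ = √s.card * K := by
        rw [Finset.sum_const, nsmul_eq_mul, Real.sqrt_mul (Nat.cast_nonneg _), Real.sqrt_sq hK]

theorem integral_abs_sum_sub_integral_le_truncAbs [IsProbabilityMeasure μ] {ι : Type*}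
    {Z : ι → Ω → ℝ} (s : Finset ι) {K : ℝ} (hK : 0 ≤ K) (hZ : ∀ i, Integrable (Z i) μ)
    (hindep : iIndepFun Z μ) :
    ∫ ω, |∑ i ∈ s, (Z i ω - μ[Z i])| ∂μ ≤
      √s.card * K + 2 * ∑ i ∈ s, ∫ ω, |Z i ω - truncAbs K (Z i ω)| ∂μ := by
  set X : ι → Ω → ℝ := fun i ω => truncAbs K (Z i ω)
  set Y : ι → Ω → ℝ := fun i ω => Z i ω - X i ω
  have hX : ∀ i, Integrable (X i) μ := fun i => (hZ i).truncAbs_comp K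
  have hY : ∀ i, Integrable (Y i) μ := fun i => (hZ i).sub (hX i)
  have hXindep : iIndepFun X μ :=
    hindep.comp (fun _ => truncAbs K) (fun _ => measurable_truncAbs K)
  have hsplit : ∀ ω, ∑ i ∈ s, (Z i ω - μ[Z i]) =
      ∑ i ∈ s, (X i ω - μ[X i]) + ∑ i ∈ s, (Y i ω - μ[Y i]) := fun ω => by
    rw [← Finset.sum_add_distrib]
    refine Finset.sum_congr rfl fun i _ => ?_
    have hYmean : μ[Y i] = μ[Z i] - μ[X i] := integral_sub (hZ i) (hX i)
    rw [hYmean]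
    ring
  have hXc : Integrable (fun ω => |∑ i ∈ s, (X i ω - μ[X i])|) μ :=
    (integrable_finsetSum _ fun i _ => (hX i).sub (integrable_const _)).abs
  have hYc : ∀ i, Integrable (fun ω => |Y i ω - μ[Y i]|) μ := fun i =>
    ((hY i).sub (integrable_const _)).abs
  calc _ ≤ ∫ ω, (|∑ i ∈ s, (X i ω - μ[X i])| + ∑ i ∈ s, |Y i ω - μ[Y i]|) ∂μ := by
        refine integral_mono ((integrable_finsetSum _ fun i _ =>
          (hZ i).sub (integrable_const _)).abs) (hXc.add (integrable_finsetSum _ fun i _ => hYc i))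
          fun ω => ?_
        rw [hsplit]
        exact (abs_add_le _ _).trans (add_le_add le_rfl (Finset.abs_sum_le_sum_abs _ _))
    _ = ∫ ω, |∑ i ∈ s, (X i ω - μ[X i])| ∂μ + ∑ i ∈ s, ∫ ω, |Y i ω - μ[Y i]| ∂μ := by
        rw [integral_add hXc (integrable_finsetSum _ fun i _ => hYc i),
          integral_finsetSum _ fun i _ => hYc i]
    _ ≤ √s.card * K + ∑ i ∈ s, 2 * ∫ ω, |Y i ω| ∂μ := by
        gcongr with i
        · exact integral_abs_sum_sub_integral_le_of_abs_le hK
            (fun i _ => (hX i).aemeasurable) (fun i _ => ae_of_all _ fun ω => abs_truncAbs_le hK _)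
            (fun i _ j _ hij => hXindep.indepFun hij)
        · exact integral_abs_sub_integral_le_two_mul (hY i)
    _ = _ := by rw [Finset.mul_sum]

end

lemma truncation_tail_bound_le {C η ε N : ℝ} (hC : 0 < C) (hη : 0 < η) (hε : 0 < ε)
    (hN : (2 * C) ^ (2 / η) * (1 + 1 / η) ^ (2 / η) / (ε / 2) ^ (2 + 2 / η) ≤ N) :
    C * (1 + 1 / η) * (ε / 2 * √N) ^ (-η) ≤ ε / 4 := by
  have ha : 0 < ε / 2 := by positivity
  have hN0 : 0 < N := lt_of_lt_of_le (by positivity) hN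
  set P := (ε / 2) ^ η * N ^ (η / 2)
  have hpow : (2 * C * (1 + 1 / η)) ^ (2 / η) ≤ ((ε / 2) ^ (1 + η) * N ^ (η / 2)) ^ (2 / η) := by
    rw [Real.mul_rpow (x := (ε / 2) ^ (1 + η)) (by positivity) (by positivity),
      ← Real.rpow_mul ha.le, ← Real.rpow_mul hN0.le,
      show (1 + η) * (2 / η) = 2 + 2 / η by field_simp; ring,
      show η / 2 * (2 / η) = 1 by field_simp, Real.rpow_one, ← div_le_iff₀' (by positivity),
      Real.mul_rpow (by positivity) (by positivity)]
    exact hN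
  have hP : 2 * C * (1 + 1 / η) ≤ ε / 2 * P := by
    rw [← mul_assoc, ← Real.rpow_one_add' ha.le (by positivity)]
    exact (Real.rpow_le_rpow_iff (by positivity) (by positivity) (by positivity)).1 hpow
  rw [Real.rpow_neg (by positivity), Real.mul_rpow ha.le (Real.sqrt_nonneg _),
    Real.sqrt_eq_rpow, ← Real.rpow_mul hN0.le, one_div_mul_eq_div, ← div_eq_mul_inv,
    div_le_iff₀ (by positivity)]
  linarith

theorem mean_concentration_general {N : ℕ}
    {Ω : Type*} [MeasureSpace Ω] [IsProbabilityMeasure (volume : Measure Ω)]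
    (Z : Fin N → Ω → ℝ)
    (hindep : iIndepFun Z volume)
    (hint : ∀ i, Integrable (Z i)) (hmean : ∀ i, ∫ ω, Z i ω = 1)
    (C η : ℝ) (hC : 0 < C) (hη : 0 < η)
    (htail : ∀ i, ∀ t : ℝ, 0 < t →
      (volume {ω | t < |Z i ω|}).toReal ≤ C * t ^ (-1 - η))
    (ε : ℝ) (hε : ε ∈ Set.Ioo (0 : ℝ) 1)
    (hN : (2 * C) ^ (2 / η) * (1 + 1 / η) ^ (2 / η) / (ε / 2) ^ (2 + 2 / η) ≤ N) :
    ∫ ω, |(N : ℝ)⁻¹ * ∑ i, Z i ω - 1| ≤ ε := by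
  have hε0 : 0 < ε := hε.1
  have hN0 : (0 : ℝ) < N := lt_of_lt_of_le (by positivity) hN
  set K := ε / 2 * √N
  have hK : 0 < K := by positivity
  have htailK : ∀ i, ∫ ω, |Z i ω - truncAbs K (Z i ω)| ≤ ε / 4 := fun i =>
    (integral_abs_sub_truncAbs_le (hint i) hη hK (htail i)).trans
      (truncation_tail_bound_le hC hη hε0 hN)
  have hcenter : ∀ ω, (N : ℝ)⁻¹ * ∑ i, Z i ω - 1 = (N : ℝ)⁻¹ * ∑ i, (Z i ω - ∫ ω, Z i ω) := by
    intro ω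
    simp only [hmean, Finset.sum_sub_distrib, Finset.sum_const, Finset.card_univ,
      Fintype.card_fin, nsmul_eq_mul, mul_one]
    field_simp
  calc ∫ ω, |(N : ℝ)⁻¹ * ∑ i, Z i ω - 1|
      = (N : ℝ)⁻¹ * ∫ ω, |∑ i, (Z i ω - ∫ ω, Z i ω)| := by
        simp_rw [hcenter, abs_mul, abs_inv, Nat.abs_cast]
        exact integral_const_mul _ _
    _ ≤ (N : ℝ)⁻¹ * (√N * K + 2 * ∑ _i : Fin N, ε / 4) := by
        have hdev := integral_abs_sum_sub_integral_le_truncAbs Finset.univ hK.le hint hindep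
        rw [Finset.card_fin] at hdev
        gcongr
        exact hdev.trans (by gcongr with i; exact htailK i)
    _ = ε := by
        simp only [K, Finset.sum_const, Finset.card_univ, Fintype.card_fin, nsmul_eq_mul]
        rw [← mul_assoc, mul_comm √_, mul_assoc, Real.mul_self_sqrt hN0.le]
        field_simp
        ring

theorem mean_concentration {N : ℕ}
    {Ω : Type*} [MeasureSpace Ω] [IsProbabilityMeasure (volume : Measure Ω)]
    (Z : Fin N → Ω → ℝ) (hmeas : ∀ i, Measurable (Z i))
    (hindep : iIndepFun Z volume)
    (hint : ∀ i, Integrable (Z i)) (hmean : ∀ i, ∫ ω, Z i ω = 1)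
    (C η : ℝ) (hC : 0 < C) (hη : 0 < η)
    (htail : ∀ i, ∀ t : ℝ, 0 < t →
      (volume {ω | t < |Z i ω|}).toReal ≤ C * t ^ (-1 - η))
    (ε : ℝ) (hε : ε ∈ Set.Ioo (0 : ℝ) 1)
    (hN : (2 * C) ^ (2 / η) * (1 + 1 / η) ^ (2 / η) / (ε / 2) ^ (2 + 2 / η) ≤ N) :
    ∫ ω, |(N : ℝ)⁻¹ * ∑ i, Z i ω - 1| ≤ ε :=
  mean_concentration_general Z hindep hint hmean C η hC hη htail ε hε hN
end
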